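/- arXiv:2108.04850 — 4 statements merged into one kernel-verified Lean document; each statement's English description precedes it below -/
import Mathlib

section
/- Let G be a finite simple graph, let v_1, …, v_k (k ≥ 1) be distinct vertices of G whose closed neighbourhoods all coincide, N[v_1] = ⋯ = N[v_k], and let w be a vertex of G distinct from all v_j and adjacent to no v_j. For 0 ≤ j ≤ k let G_j be the graph obtained from G by adding the edges v_1w, v_2w, …, v_jw (so G_0 = G). Then for every n ∈ ℕ the sequence (X_{G_j}^{(n)})_{j=0}^{k} is an arithmetic progression in ℚ[x_1,…,x_n], i.e. X_{G_{j+1}}^{(n)} − X_{G_j}^{(n)} = X_{G_1}^{(n)} − X_{G_0}^{(n)} for all 0 ≤ j ≤ k−1; in particular X_{G_j}^{(n)} = ((k−j)/k)·X_{G_0}^{(n)} + (j/k)·X_{G_k}^{(n)} for all 0 ≤ j ≤ k. -/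
open scoped Classical
noncomputable section

/-- Words of length `d` in the positive integers. -/
abbrev NCWord (d : ℕ) := Fin d → ℕ+

/-- `M_d`: coefficient functions of homogeneous degree-`d` series in
noncommuting variables. -/
abbrev Md (d : ℕ) := NCWord d → ℚ

/-- `Y_G`, the chromatic symmetric function of a labelled graph in
noncommuting variables, as an element of `M_d`. -/
def YG {d : ℕ} (G : SimpleGraph (Fin d)) : Md d :=
  fun w => if ∀ j k : Fin d, G.Adj j k → w j ≠ w k then 1 else 0

/-- Set partitions of `{0, …, d-1}`. -/
abbrev SetPtn (d : ℕ) := Finpartition (Finset.univ : Finset (Fin d))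

/-- `j` and `k` lie in a common block of `π`. -/
def sameBlock {d : ℕ} (π : SetPtn d) (j k : Fin d) : Prop :=
  ∃ B ∈ π.parts, j ∈ B ∧ k ∈ B

/-- The elementary symmetric function `e_π` in noncommuting variables. -/
def eSP {d : ℕ} (π : SetPtn d) : Md d :=
  fun w => if ∀ j k : Fin d, j ≠ k → sameBlock π j k → w j ≠ w k then 1 else 0

/-- The block of `π` containing `a`. -/
def blockOf {d : ℕ} (π : SetPtn d) (a : Fin d) : Finset (Fin d) :=
  Finset.univ.filter fun k => sameBlock π a k

/-- The type of a set partition relative to the distinguished element `a`: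
the multiset of sizes of the blocks not containing `a` (an integer partition),
together with the size of the block containing `a`. -/
def ptype {d : ℕ} (π : SetPtn d) (a : Fin d) : Multiset ℕ × ℕ :=
  ((π.parts.erase (blockOf π a)).val.map Finset.card, (blockOf π a).card)

/-- `K_d`: the span of the differences `e_{π₁} - e_{π₂}` over pairs of set
partitions of equal type (relative to the distinguished element `a`). -/
def Ksub {d : ℕ} (a : Fin d) : Submodule ℚ (Md d) :=
  Submodule.span ℚ
    {f | ∃ π₁ π₂ : SetPtn d, ptype π₁ a = ptype π₂ a ∧ f = eSP π₁ - eSP π₂}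

/-- `(e)`-positivity of a labelled graph, with distinguished vertex `a`:
`Y_G` is congruent modulo `K_d` to a nonnegative combination of `e_π`'s. -/
def IsEPosNCAt {d : ℕ} (G : SimpleGraph (Fin d)) (a : Fin d) : Prop :=
  ∃ (s : Finset (SetPtn d)) (c : SetPtn d → ℚ),
    (∀ π, 0 ≤ c π) ∧ YG G - ∑ π ∈ s, c π • eSP π ∈ Ksub a

/-- Induction `↑ : M_d → M_{d+1}`. -/
def induct {d : ℕ} (f : Md d) : Md (d + 1) :=
  fun w => if w (Fin.last d) = w ⟨d - 1, by omega⟩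
    then f (fun t => w t.castSucc) else 0

/-- Concatenation of labelled graphs: identify the last vertex of `G` with
the first vertex of `H`. -/
def concatG {p q : ℕ} (G : SimpleGraph (Fin p)) (H : SimpleGraph (Fin q)) :
    SimpleGraph (Fin (p + q - 1)) :=
  SimpleGraph.fromRel fun a b =>
    (∃ i j : Fin p, G.Adj i j ∧ (a : ℕ) = (i : ℕ) ∧ (b : ℕ) = (j : ℕ)) ∨
    (∃ i j : Fin q, H.Adj i j ∧ (a : ℕ) = (i : ℕ) + (p - 1) ∧ (b : ℕ) = (j : ℕ) + (p - 1))

/-- The reverse graph `G^r`. -/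
def revG {d : ℕ} (G : SimpleGraph (Fin d)) : SimpleGraph (Fin d) :=
  SimpleGraph.comap (fun i : Fin d => (⟨d - 1 - (i : ℕ), by have := i.isLt; omega⟩ : Fin d)) G

/-- A labelled graph: a simple graph on vertex set `{0, …, n-1}`, `n ≥ 1`. -/
structure LGraph where
  n : ℕ
  npos : 0 < n
  G : SimpleGraph (Fin n)

/-- The last vertex of a labelled graph. -/
def LGraph.last (A : LGraph) : Fin A.n := ⟨A.n - 1, by have := A.npos; omega⟩

/-- A labelled graph is `(e)`-positive (at its last vertex). -/
def LGraph.EPosNC (A : LGraph) : Prop := IsEPosNCAt A.G A.last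

/-- Concatenation, as an operation on labelled graphs. -/
def LGraph.concat (A B : LGraph) : LGraph :=
  ⟨A.n + B.n - 1, by have := A.npos; have := B.npos; omega, concatG A.G B.G⟩

/-- Reversal, as an operation on labelled graphs. -/
def LGraph.rev (A : LGraph) : LGraph := ⟨A.n, A.npos, revG A.G⟩

/-- Appendable `(e)`-positivity: `G + H` is `(e)`-positive for every
`(e)`-positive labelled graph `G`. -/
def LGraph.Appendable (H : LGraph) : Prop :=
  ∀ A : LGraph, A.EPosNC → (A.concat H).EPosNC

/-- The chromatic symmetric polynomial of `G` in `n` commuting variables. -/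
def cspoly {V : Type} [Fintype V] [DecidableEq V] (G : SimpleGraph V) (n : ℕ) :
    MvPolynomial (Fin n) ℚ :=
  ∑ κ ∈ Finset.univ.filter (fun κ : V → Fin n => ∀ u v : V, G.Adj u v → κ u ≠ κ v),
    ∏ v : V, MvPolynomial.X (κ v)

/-- `e`-positivity of a finite graph. -/
def EPos {V : Type} [Fintype V] [DecidableEq V] (G : SimpleGraph V) : Prop :=
  ∃ c : Nat.Partition (Fintype.card V) → ℚ, (∀ p, 0 ≤ c p) ∧
    ∀ n : ℕ, cspoly G n =
      ∑ p : Nat.Partition (Fintype.card V),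
        c p • (p.parts.map fun r => MvPolynomial.esymm (Fin n) ℚ r).prod

/-- Closed neighbourhood of a vertex, as a finset. -/
def closedNbhd {d : ℕ} (G : SimpleGraph (Fin d)) (i : Fin d) : Finset (Fin d) :=
  Finset.univ.filter fun k => k = i ∨ G.Adj i k

/-- `m_i`: the largest label in the closed neighbourhood of `i`. -/
def mIdx {d : ℕ} (G : SimpleGraph (Fin d)) (i : Fin d) : Fin d :=
  (closedNbhd G i).max' ⟨i, by simp [closedNbhd]⟩

/-- `w_i`: the smallest label in the closed neighbourhood of `i`. -/
def wIdx {d : ℕ} (G : SimpleGraph (Fin d)) (i : Fin d) : Fin d :=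
  (closedNbhd G i).min' ⟨i, by simp [closedNbhd]⟩

/-- Labelled unit interval graph. -/
def IsUnitInterval {d : ℕ} (G : SimpleGraph (Fin d)) : Prop :=
  ∀ i v w j : Fin d, i ≤ v → v < w → w ≤ j → G.Adj i j → G.Adj v w

/-- An acyclic orientation of a graph, as an asymmetric relation with
irreflexive transitive closure whose symmetrization matches adjacency. -/
def IsAcyclicOrientation {V : Type} (G : SimpleGraph V) (r : V → V → Prop) : Prop :=
  (∀ a b, r a b → ¬ r b a) ∧
  (∀ a b, a ≠ b → ((r a b ∨ r b a) ↔ G.Adj a b)) ∧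
  Irreflexive (Relation.TransGen r)

/-- The set of sinks of an orientation. -/
def sinkSet {V : Type} [Fintype V] (r : V → V → Prop) : Finset V :=
  Finset.univ.filter fun x => ∀ y, ¬ r x y

/-- The labelled path `P_d`. -/
def PathG (d : ℕ) : SimpleGraph (Fin d) :=
  SimpleGraph.fromRel fun a b => (b : ℕ) = (a : ℕ) + 1

/-- The labelled cycle `C_d`. -/
def CycleG (d : ℕ) : SimpleGraph (Fin d) :=
  SimpleGraph.fromRel fun a b => (b : ℕ) = (a : ℕ) + 1 ∨ ((a : ℕ) = 0 ∧ (b : ℕ) = d - 1)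

/-- The graph obtained from `G` by adding the edges `v_1 w, …, v_j w`. -/
def addStarEdges {V : Type} (G : SimpleGraph V) {k : ℕ} (v : Fin k → V) (w : V)
    (j : ℕ) : SimpleGraph V :=
  SimpleGraph.fromRel fun a b =>
    G.Adj a b ∨ ∃ t : Fin k, (t : ℕ) < j ∧ a = v t ∧ b = w


/-!
Adding the edge `v_{j+1} w` to `G_j` removes exactly the proper colourings of `G_j` in which
`v_{j+1}` and `w` share a colour. As `v_{j+1}` is adjacent to `v_1, …, v_j`, these are the proper
colourings of `G` with `κ v_{j+1} = κ w`, and exchanging the true twins `v_1` and `v_{j+1}` (an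
automorphism of `G` fixing `w`) shows that their contribution does not depend on `j`.
-/

def SimpleGraph.TrueTwins {V : Type} (G : SimpleGraph V) (a b : V) : Prop :=
  ∀ x, (x = a ∨ G.Adj a x) ↔ (x = b ∨ G.Adj b x)

namespace SimpleGraph.TrueTwins

variable {V : Type} {G : SimpleGraph V} {a b : V}

theorem symm (h : G.TrueTwins a b) : G.TrueTwins b a := fun x => (h x).symm

theorem adj (h : G.TrueTwins a b) (hab : a ≠ b) : G.Adj a b :=
  ((h b).2 (Or.inl rfl)).resolve_left hab.symm

theorem adj_iff (h : G.TrueTwins a b) {x : V} (hxa : x ≠ a) (hxb : x ≠ b) :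
    G.Adj a x ↔ G.Adj b x := by
  simpa [hxa, hxb] using h x

theorem adj_swap [DecidableEq V] (h : G.TrueTwins a b) {x y : V} (hxy : G.Adj x y) :
    G.Adj (Equiv.swap a b x) (Equiv.swap a b y) := by
  have hab := h.adj
  have hba := h.symm.adj
  have hxb := @h.adj_iff
  have hxa := @h.symm.adj_iff
  simp only [Equiv.swap_apply_def]
  split_ifs <;> subst_vars <;> grind [SimpleGraph.Adj.symm, SimpleGraph.Adj.ne]

def swapIso [DecidableEq V] (h : G.TrueTwins a b) : G ≃g G where
  toEquiv := Equiv.swap a b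
  map_rel_iff' {x y} := ⟨fun hxy => by
    simpa only [Equiv.swap_comm b a, Equiv.swap_apply_self] using h.symm.adj_swap hxy,
    h.adj_swap⟩

end SimpleGraph.TrueTwins

section Colourings

variable {V : Type} [Fintype V] [DecidableEq V]

def cspolySameColour (G : SimpleGraph V) (n : ℕ) (a b : V) : MvPolynomial (Fin n) ℚ :=
  ∑ κ ∈ Finset.univ.filter (fun κ : V → Fin n =>
      (∀ u v : V, G.Adj u v → κ u ≠ κ v) ∧ κ a = κ b),
    ∏ v : V, MvPolynomial.X (κ v)

theorem cspoly_eq_cspoly_sup_edge_add (G : SimpleGraph V) (n : ℕ) {a b : V} (hab : a ≠ b) :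
    cspoly G n = cspoly (G ⊔ SimpleGraph.edge a b) n + cspolySameColour G n a b := by
  unfold cspoly cspolySameColour
  rw [← Finset.sum_filter_add_sum_filter_not _ (fun κ => κ a ≠ κ b), Finset.filter_filter,
    Finset.filter_filter]
  congr 2
  · ext κ
    simp only [Finset.mem_filter, Finset.mem_univ, true_and, SimpleGraph.sup_adj,
      SimpleGraph.edge_adj]
    refine ⟨fun ⟨hG, hab'⟩ u v huv => ?_, fun h => ⟨fun u v huv => h u v (Or.inl huv),
      h a b (Or.inr ⟨Or.inl ⟨rfl, rfl⟩, hab⟩)⟩⟩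
    rcases huv with huv | ⟨⟨rfl, rfl⟩ | ⟨rfl, rfl⟩, -⟩
    · exact hG u v huv
    · exact hab'
    · exact hab'.symm
  · simp only [not_not]

theorem cspolySameColour_eq_of_le {G H : SimpleGraph V} (n : ℕ) {a b : V} (hGH : G ≤ H)
    (hH : ∀ x y, H.Adj x y → G.Adj x y ∨ (G.Adj a x ∧ y = b) ∨ (G.Adj a y ∧ x = b)) :
    cspolySameColour H n a b = cspolySameColour G n a b := by
  unfold cspolySameColour
  congr 1
  ext κ
  simp only [Finset.mem_filter, Finset.mem_univ, true_and, and_congr_left_iff]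
  refine fun hκ => ⟨fun h u v huv => h u v (hGH huv), fun h x y hxy => ?_⟩
  rcases hH x y hxy with hxy | ⟨hax, rfl⟩ | ⟨hay, rfl⟩
  · exact h x y hxy
  · exact hκ ▸ (h a x hax).symm
  · exact hκ ▸ h a y hay

theorem cspolySameColour_iso (G : SimpleGraph V) (n : ℕ) (φ : G ≃g G) (a b : V) :
    cspolySameColour G n (φ a) (φ b) = cspolySameColour G n a b := by
  unfold cspolySameColour
  refine Finset.sum_equiv (Equiv.arrowCongr φ.symm.toEquiv (Equiv.refl _)) (fun κ => ?_)
    (fun κ _ => (Equiv.prod_comp φ.toEquiv fun v => MvPolynomial.X (κ v)).symm)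
  simp only [Finset.mem_filter, Finset.mem_univ, true_and, Equiv.arrowCongr_apply,
    Equiv.coe_refl, Function.comp_apply, id]
  change _ ↔ (∀ u v, G.Adj u v → κ (φ u) ≠ κ (φ v)) ∧ _
  refine and_congr_left' ⟨fun h u v huv => h _ _ (φ.map_adj_iff.2 huv), fun h u v huv => ?_⟩
  simpa using h (φ.symm u) (φ.symm v) (φ.symm.map_adj_iff.2 huv)

end Colourings

section ArithmeticProgression

variable {M : Type*} [AddCommGroup M] {f : ℕ → M} {d : M} {k : ℕ}

theorem eq_sub_nsmul_of_sub_succ_eq (h : ∀ j < k, f j - f (j + 1) = d) {j : ℕ} (hj : j ≤ k) :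
    f j = f 0 - j • d := by
  induction j with
  | zero => simp
  | succ j ih =>
    rw [succ_nsmul, ← sub_sub, ← ih (by omega), ← h j hj]
    abel

theorem eq_smul_add_smul_of_sub_succ_eq [Module ℚ M] (h : ∀ j < k, f j - f (j + 1) = d)
    (hk : k ≠ 0) {j : ℕ} (hj : j ≤ k) :
    f j = (((k : ℚ) - j) / k) • f 0 + ((j : ℚ) / k) • f k := by
  rw [eq_sub_nsmul_of_sub_succ_eq h hj, eq_sub_nsmul_of_sub_succ_eq h le_rfl,
    ← Nat.cast_smul_eq_nsmul ℚ, ← Nat.cast_smul_eq_nsmul ℚ]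
  have hk' : (k : ℚ) ≠ 0 := Nat.cast_ne_zero.2 hk
  match_scalars <;> field_simp; ring

end ArithmeticProgression

section StarEdges

variable {V : Type} (G : SimpleGraph V) {k : ℕ} (v : Fin k → V) (w : V)

theorem le_addStarEdges (j : ℕ) : G ≤ addStarEdges G v w j := fun a b hab => by
  simp [addStarEdges, hab, hab.ne]

theorem addStarEdges_adj {j : ℕ} {a b : V} (h : (addStarEdges G v w j).Adj a b) :
    G.Adj a b ∨ ∃ t : Fin k, (t : ℕ) < j ∧ (a = v t ∧ b = w ∨ a = w ∧ b = v t) := by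
  simp only [addStarEdges, SimpleGraph.fromRel_adj] at h
  grind [SimpleGraph.Adj.symm]

theorem addStarEdges_succ {j : ℕ} (hj : j < k) :
    addStarEdges G v w (j + 1) = addStarEdges G v w j ⊔ SimpleGraph.edge (v ⟨j, hj⟩) w := by
  ext a b
  simp only [addStarEdges, SimpleGraph.sup_adj, SimpleGraph.fromRel_adj, SimpleGraph.edge_adj]
  have hlt : ∀ t : Fin k, (t : ℕ) < j + 1 ↔ (t : ℕ) < j ∨ t = ⟨j, hj⟩ := fun t => by
    rw [Fin.ext_iff]; exact Nat.lt_succ_iff_lt_or_eq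
  simp only [hlt, or_and_right, exists_or, exists_eq_left]
  grind

end StarEdges

theorem cspoly_addStarEdges_sub_succ {V : Type} [Fintype V] [DecidableEq V] {G : SimpleGraph V}
    {k : ℕ} {v : Fin k → V} (hv : Function.Injective v) {w : V} (hw : ∀ t, w ≠ v t)
    (htwins : ∀ s t, G.TrueTwins (v s) (v t)) (i : Fin k) (n : ℕ) {j : ℕ} (hj : j < k) :
    cspoly (addStarEdges G v w j) n - cspoly (addStarEdges G v w (j + 1)) n =
      cspolySameColour G n (v i) w := by
  set vj := v ⟨j, hj⟩
  have hsame : cspolySameColour (addStarEdges G v w j) n vj w = cspolySameColour G n vj w := by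
    refine cspolySameColour_eq_of_le n (le_addStarEdges G v w j) fun x y hxy => ?_
    have hvj : ∀ t : Fin k, (t : ℕ) < j → G.Adj vj (v t) := fun t ht =>
      (htwins _ _).adj (hv.ne (Fin.ne_of_gt ht))
    rcases addStarEdges_adj G v w hxy with hxy | ⟨t, ht, ⟨rfl, rfl⟩ | ⟨rfl, rfl⟩⟩
    · exact Or.inl hxy
    · exact Or.inr (Or.inl ⟨hvj t ht, rfl⟩)
    · exact Or.inr (Or.inr ⟨hvj t ht, rfl⟩)
  have hswap : cspolySameColour G n vj w = cspolySameColour G n (v i) w := by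
    have := cspolySameColour_iso G n (htwins i ⟨j, hj⟩).swapIso (v i) w
    rwa [SimpleGraph.TrueTwins.swapIso, RelIso.coe_fn_mk, Equiv.swap_apply_left,
      Equiv.swap_apply_of_ne_of_ne (hw _) (hw _)] at this
  rw [addStarEdges_succ G v w hj, cspoly_eq_cspoly_sup_edge_add _ n (hw _).symm,
    add_sub_cancel_left, hsame, hswap]

theorem stmt0_general {V : Type} [Fintype V] [DecidableEq V] (G : SimpleGraph V)
    (k : ℕ) (hk : 1 ≤ k) (v : Fin k → V) (hv : Function.Injective v)
    (w : V) (hw : ∀ t, w ≠ v t)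
    (hnbhd : ∀ s t : Fin k, ∀ x : V,
      (x = v s ∨ G.Adj (v s) x) ↔ (x = v t ∨ G.Adj (v t) x)) :
    (∀ n j : ℕ, j + 1 ≤ k →
      cspoly (addStarEdges G v w (j + 1)) n - cspoly (addStarEdges G v w j) n =
        cspoly (addStarEdges G v w 1) n - cspoly (addStarEdges G v w 0) n) ∧
    (∀ n j : ℕ, j ≤ k →
      cspoly (addStarEdges G v w j) n =
        (((k : ℚ) - (j : ℚ)) / (k : ℚ)) • cspoly (addStarEdges G v w 0) n +
          ((j : ℚ) / (k : ℚ)) • cspoly (addStarEdges G v w k) n) := by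
  have step (n j : ℕ) (hj : j < k) := cspoly_addStarEdges_sub_succ hv hw hnbhd ⟨0, hk⟩ n hj
  refine ⟨fun n j hj => ?_, fun n j hj => ?_⟩
  · linear_combination step n 0 hk - step n j hj
  · exact eq_smul_add_smul_of_sub_succ_eq (step n) (by omega) hj

theorem stmt0 {V : Type} [Fintype V] [DecidableEq V] (G : SimpleGraph V)
    (k : ℕ) (hk : 1 ≤ k) (v : Fin k → V) (hv : Function.Injective v)
    (w : V) (hw : ∀ t, w ≠ v t) (hwadj : ∀ t, ¬ G.Adj w (v t))
    (hnbhd : ∀ s t : Fin k, ∀ x : V,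
      (x = v s ∨ G.Adj (v s) x) ↔ (x = v t ∨ G.Adj (v t) x)) :
    (∀ n j : ℕ, j + 1 ≤ k →
      cspoly (addStarEdges G v w (j + 1)) n - cspoly (addStarEdges G v w j) n =
        cspoly (addStarEdges G v w 1) n - cspoly (addStarEdges G v w 0) n) ∧
    (∀ n j : ℕ, j ≤ k →
      cspoly (addStarEdges G v w j) n =
        (((k : ℚ) - (j : ℚ)) / (k : ℚ)) • cspoly (addStarEdges G v w 0) n +
          ((j : ℚ) / (k : ℚ)) • cspoly (addStarEdges G v w k) n) :=
  stmt0_general G k hk v hv w hw hnbhd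
end
end

section
/- A labelled graph H is appendable (e)-positive if and only if for every integer d ≥ 1 the concatenation K_d + H is (e)-positive, where K_d is the complete labelled graph on d vertices. -/
open scoped Classical
noncomputable section

namespace Apd

open Finset

/-! ### blockOf basics -/

lemma blockOf_eq_part {d : ℕ} (π : SetPtn d) (a : Fin d) : blockOf π a = π.part a := by
  ext k
  simp only [blockOf, Finset.mem_filter, Finset.mem_univ, true_and]
  constructor
  · rintro ⟨B, hB, haB, hkB⟩
    rwa [π.part_eq_of_mem hB haB]
  · intro hk
    exact ⟨π.part a, π.part_mem.mpr (Finset.mem_univ a), π.mem_part (Finset.mem_univ a), hk⟩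

lemma blockOf_mem_parts {d : ℕ} (π : SetPtn d) (a : Fin d) : blockOf π a ∈ π.parts := by
  rw [blockOf_eq_part]; exact π.part_mem.mpr (Finset.mem_univ a)

lemma mem_blockOf {d : ℕ} (π : SetPtn d) (a : Fin d) : a ∈ blockOf π a := by
  rw [blockOf_eq_part]; exact π.mem_part (Finset.mem_univ a)

lemma blockOf_eq_of_mem {d : ℕ} (π : SetPtn d) {B : Finset (Fin d)} (hB : B ∈ π.parts)
    {a : Fin d} (ha : a ∈ B) : blockOf π a = B := by
  rw [blockOf_eq_part]; exact π.part_eq_of_mem hB ha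

lemma ite_mul_ite (P Q : Prop) [Decidable P] [Decidable Q] :
    (if P then (1:ℚ) else 0) * (if Q then 1 else 0) = if P ∧ Q then 1 else 0 := by
  by_cases hP : P <;> by_cases hQ : Q <;> simp [hP, hQ]

/-! ### The positivity cone -/

def Cone {d : ℕ} (a : Fin d) : Set (Md d) :=
  {f | ∃ (s : Finset (SetPtn d)) (c : SetPtn d → ℚ),
    (∀ π, 0 ≤ c π) ∧ f - ∑ π ∈ s, c π • eSP π ∈ Ksub a}

lemma isEPosNCAt_iff_cone {d : ℕ} (G : SimpleGraph (Fin d)) (a : Fin d) :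
    IsEPosNCAt G a ↔ YG G ∈ Cone a := Iff.rfl

lemma ksub_mem_cone {d : ℕ} {a : Fin d} {f : Md d} (hf : f ∈ Ksub a) : f ∈ Cone a :=
  ⟨∅, 0, fun _ => le_rfl, by simpa using hf⟩

lemma eSP_mem_cone {d : ℕ} (a : Fin d) (π : SetPtn d) : eSP π ∈ Cone a := by
  refine ⟨{π}, fun _ => 1, fun _ => zero_le_one, ?_⟩
  simp only [Finset.sum_singleton, one_smul, sub_self]
  exact Submodule.zero_mem _

lemma add_mem_cone {d : ℕ} {a : Fin d} {f g : Md d} (hf : f ∈ Cone a) (hg : g ∈ Cone a) :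
    f + g ∈ Cone a := by
  obtain ⟨s1, c1, hc1, h1⟩ := hf
  obtain ⟨s2, c2, hc2, h2⟩ := hg
  refine ⟨s1 ∪ s2, fun π => (if π ∈ s1 then c1 π else 0) + (if π ∈ s2 then c2 π else 0),
    fun π => add_nonneg (by by_cases h : π ∈ s1 <;> simp [h, hc1 π])
      (by by_cases h : π ∈ s2 <;> simp [h, hc2 π]), ?_⟩
  have hs : ∑ π ∈ s1 ∪ s2,
      ((if π ∈ s1 then c1 π else 0) + (if π ∈ s2 then c2 π else 0)) • eSP π
      = (∑ π ∈ s1, c1 π • eSP π) + ∑ π ∈ s2, c2 π • eSP π := by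
    simp only [add_smul, ite_smul, zero_smul, Finset.sum_add_distrib, Finset.sum_ite_mem,
      Finset.union_inter_cancel_left, Finset.union_inter_cancel_right]
  rw [hs]
  have : f + g - ((∑ π ∈ s1, c1 π • eSP π) + ∑ π ∈ s2, c2 π • eSP π)
      = (f - ∑ π ∈ s1, c1 π • eSP π) + (g - ∑ π ∈ s2, c2 π • eSP π) := by abel
  rw [this]
  exact Submodule.add_mem _ h1 h2

lemma smul_mem_cone {d : ℕ} {a : Fin d} {r : ℚ} (hr : 0 ≤ r) {f : Md d} (hf : f ∈ Cone a) :
    r • f ∈ Cone a := by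
  obtain ⟨s, c, hc, h⟩ := hf
  refine ⟨s, fun π => r * c π, fun π => mul_nonneg hr (hc π), ?_⟩
  have hs : ∑ π ∈ s, (r * c π) • eSP π = r • ∑ π ∈ s, c π • eSP π := by
    rw [Finset.smul_sum]
    exact Finset.sum_congr rfl fun π _ => mul_smul r (c π) _
  rw [hs, ← smul_sub]
  exact Submodule.smul_mem _ _ h

lemma sum_mem_cone {d : ℕ} {a : Fin d} {ι : Type} (s : Finset ι) (c : ι → ℚ) (f : ι → Md d)
    (hc : ∀ i, 0 ≤ c i) (hf : ∀ i ∈ s, f i ∈ Cone a) : (∑ i ∈ s, c i • f i) ∈ Cone a := by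
  classical
  induction s using Finset.induction_on with
  | empty => simpa using ksub_mem_cone (Submodule.zero_mem (Ksub a))
  | insert _ _ hnew ih =>
      rw [Finset.sum_insert hnew]
      exact add_mem_cone (smul_mem_cone (hc _) (hf _ (Finset.mem_insert_self _ _)))
        (ih fun i hi => hf i (Finset.mem_insert_of_mem hi))

/-! ### The pull-multiply linear operator -/

def pullMul {n N : ℕ} (e : Fin n → Fin N) (χ : NCWord N → ℚ) : Md n →ₗ[ℚ] Md N where
  toFun f := fun w => f (fun t => w (e t)) * χ w
  map_add' f g := by funext w; simp [add_mul]
  map_smul' r f := by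
    funext w
    simp only [Pi.smul_apply, smul_eq_mul, RingHom.id_apply]
    ring

@[simp] lemma pullMul_apply {n N : ℕ} (e : Fin n → Fin N) (χ : NCWord N → ℚ) (f : Md n)
    (w : NCWord N) : pullMul e χ f w = f (fun t => w (e t)) * χ w := rfl

end Apd
namespace Apd

lemma YG_concat {p q : ℕ} (hp : 0 < p) (hq : 0 < q) (G : SimpleGraph (Fin p))
    (H : SimpleGraph (Fin q)) (w : NCWord (p + q - 1)) :
    YG (concatG G H) w
      = YG G (fun t => w ⟨t.val, by have := t.isLt; omega⟩)
        * YG H (fun t => w ⟨t.val + (p - 1), by have := t.isLt; omega⟩) := by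
  unfold YG
  rw [ite_mul_ite]
  refine if_congr ?_ rfl rfl
  constructor
  · intro hall
    constructor
    · intro j k hjk
      have hne : j ≠ k := G.ne_of_adj hjk
      refine hall ⟨j.val, by have := j.isLt; omega⟩ ⟨k.val, by have := k.isLt; omega⟩ ?_
      rw [concatG, SimpleGraph.fromRel_adj]
      exact ⟨by simpa [Fin.ext_iff] using fun h => hne (Fin.ext h),
        Or.inl (Or.inl ⟨j, k, hjk, rfl, rfl⟩)⟩
    · intro j k hjk
      have hne : j ≠ k := H.ne_of_adj hjk
      refine hall ⟨j.val + (p - 1), by have := j.isLt; omega⟩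
        ⟨k.val + (p - 1), by have := k.isLt; omega⟩ ?_
      rw [concatG, SimpleGraph.fromRel_adj]
      refine ⟨?_, Or.inl (Or.inr ⟨j, k, hjk, rfl, rfl⟩)⟩
      have : j.val ≠ k.val := fun h => hne (Fin.ext h)
      simp [Fin.ext_iff]
      omega
  · rintro ⟨hG, hH⟩ a b hab
    rw [concatG, SimpleGraph.fromRel_adj] at hab
    obtain ⟨hne, h | h⟩ := hab
    · rcases h with ⟨i, j, hij, ha, hb⟩ | ⟨i, j, hij, ha, hb⟩
      · exact fun hw => hG i j hij ((congrArg w (Fin.ext ha.symm)).trans (hw.trans (congrArg w (Fin.ext hb))))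
      · exact fun hw => hH i j hij ((congrArg w (Fin.ext ha.symm)).trans (hw.trans (congrArg w (Fin.ext hb))))
    · rcases h with ⟨i, j, hij, hb, ha⟩ | ⟨i, j, hij, hb, ha⟩
      · exact fun hw => hG j i hij.symm ((congrArg w (Fin.ext ha.symm)).trans (hw.trans (congrArg w (Fin.ext hb))))
      · exact fun hw => hH j i hij.symm ((congrArg w (Fin.ext ha.symm)).trans (hw.trans (congrArg w (Fin.ext hb))))

end Apd
namespace Apd

/-! ### Embeddings -/

/-- Distinguished last element. -/
def lastN (n : ℕ) (hn : 0 < n) : Fin n := ⟨n - 1, by omega⟩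

def castι {n m : ℕ} (hm : 0 < m) : Fin n → Fin (n + m - 1) :=
  fun t => ⟨t.val, by have := t.isLt; omega⟩

lemma castι_injective {n m : ℕ} (hm : 0 < m) :
    Function.Injective (castι (n := n) hm) :=
  fun x y h => by
  have : (castι hm x).val = (castι hm y).val := congrArg Fin.val h
  exact Fin.ext this

def embD {n m b : ℕ} (hm : 0 < m) (D : Finset (Fin n)) (hDb : D.card = b) :
    Fin (b + m - 1) → Fin (n + m - 1) := fun t =>
  if h : t.val < b then castι hm (D.orderEmbOfFin hDb ⟨t.val, h⟩)
  else ⟨t.val - b + n, by have := t.isLt; omega⟩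

lemma embD_lt {n m b : ℕ} (hm : 0 < m) (D : Finset (Fin n)) (hDb : D.card = b)
    {t : Fin (b + m - 1)} (h : t.val < b) :
    embD hm D hDb t = castι hm (D.orderEmbOfFin hDb ⟨t.val, h⟩) := dif_pos h

lemma embD_ge {n m b : ℕ} (hm : 0 < m) (D : Finset (Fin n)) (hDb : D.card = b)
    {t : Fin (b + m - 1)} (h : ¬ t.val < b) :
    embD hm D hDb t = ⟨t.val - b + n, by have := t.isLt; omega⟩ := dif_neg h

lemma embD_injective {n m b : ℕ} (hm : 0 < m) (D : Finset (Fin n)) (hDb : D.card = b) :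
    Function.Injective (embD hm D hDb) := by
  intro x y hxy
  by_cases hx : x.val < b <;> by_cases hy : y.val < b
  · rw [embD_lt hm D hDb hx, embD_lt hm D hDb hy] at hxy
    have := (D.orderEmbOfFin hDb).injective (castι_injective hm hxy)
    injection this with h3
    exact Fin.ext h3
  · exfalso
    rw [embD_lt hm D hDb hx, embD_ge hm D hDb hy] at hxy
    have h1 := congrArg Fin.val hxy
    have h2 := (D.orderEmbOfFin hDb ⟨x.val, hx⟩).isLt
    simp only [castι] at h1
    omega
  · exfalso
    rw [embD_ge hm D hDb hx, embD_lt hm D hDb hy] at hxy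
    have h1 := congrArg Fin.val hxy
    have h2 := (D.orderEmbOfFin hDb ⟨y.val, hy⟩).isLt
    simp only [castι] at h1
    omega
  · rw [embD_ge hm D hDb hx, embD_ge hm D hDb hy] at hxy
    have h1 := congrArg Fin.val hxy
    simp only at h1
    exact Fin.ext (by omega)

lemma orderEmb_last_of_top {n b : ℕ} (hn : 0 < n) (D : Finset (Fin n)) (hDb : D.card = b)
    (hb : 0 < b) (hlast : lastN n hn ∈ D) :
    D.orderEmbOfFin hDb ⟨b - 1, by omega⟩ = lastN n hn := by
  have h1 : D.orderEmbOfFin hDb ⟨b - 1, Nat.sub_lt hb (Nat.succ_pos 0)⟩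
      = D.max' (Finset.card_pos.mp (hDb.symm ▸ hb)) := Finset.orderEmbOfFin_last hDb hb
  have h2 : D.max' (Finset.card_pos.mp (hDb.symm ▸ hb)) = lastN n hn := by
    apply le_antisymm
    · apply Finset.max'_le
      intro y hy
      have h := y.isLt
      have hl : (lastN n hn).val = n - 1 := rfl
      exact Fin.le_def.mpr (by omega)
    · exact Finset.le_max' _ _ hlast
  rw [← h2]
  convert h1 using 2

lemma embD_tail {n m b : ℕ} (hn : 0 < n) (hm : 0 < m) (D : Finset (Fin n)) (hDb : D.card = b)
    (hb : 0 < b) (hlast : lastN n hn ∈ D) (j : Fin m) :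
    embD hm D hDb ⟨j.val + (b - 1), by have := j.isLt; omega⟩
      = ⟨j.val + (n - 1), by have := j.isLt; omega⟩ := by
  by_cases hj : ((⟨j.val + (b - 1), by have := j.isLt; omega⟩ : Fin (b + m - 1))).val < b
  · have hj0 : j.val = 0 := by simp only at hj; omega
    rw [embD_lt hm D hDb hj]
    have he : (⟨(⟨j.val + (b - 1), by have := j.isLt; omega⟩ : Fin (b + m - 1)).val, hj⟩ : Fin b)
        = ⟨b - 1, by omega⟩ := Fin.ext (by simp only; omega)
    rw [he, orderEmb_last_of_top hn D hDb hb hlast]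
    exact Fin.ext (by simp only [castι, lastN]; omega)
  · rw [embD_ge hm D hDb hj]
    exact Fin.ext (by simp only at hj ⊢; omega)

lemma embD_lastN {n m b : ℕ} (hn : 0 < n) (hm : 0 < m) (D : Finset (Fin n)) (hDb : D.card = b)
    (hb : 0 < b) (hlast : lastN n hn ∈ D) :
    embD hm D hDb (lastN (b + m - 1) (by omega)) = lastN (n + m - 1) (by omega) := by
  by_cases h : (lastN (b + m - 1) (by omega : 0 < b + m - 1)).val < b
  · have hm1 : m = 1 := by simp only [lastN] at h; omega
    rw [embD_lt hm D hDb h]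
    have he : (⟨(lastN (b + m - 1) (by omega : 0 < b + m - 1)).val, h⟩ : Fin b)
        = ⟨b - 1, by omega⟩ := Fin.ext (by simp only [lastN]; omega)
    rw [he, orderEmb_last_of_top hn D hDb hb hlast]
    exact Fin.ext (by simp only [castι, lastN]; try omega)
  · rw [embD_ge hm D hDb h]
    exact Fin.ext (by simp only [lastN] at h ⊢; omega)

lemma exists_embD_eq {n m b : ℕ} (hm : 0 < m) (D : Finset (Fin n)) (hDb : D.card = b)
    {x : Fin n} (hx : x ∈ D) :
    ∃ i : Fin b, embD hm D hDb ⟨i.val, by have := i.isLt; omega⟩ = castι hm x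
      ∧ D.orderEmbOfFin hDb i = x := by
  have hr : x ∈ Set.range (D.orderEmbOfFin hDb) := by
    rw [Finset.range_orderEmbOfFin]; exact hx
  obtain ⟨i, hi⟩ := hr
  refine ⟨i, ?_, hi⟩
  rw [embD_lt hm D hDb (show (⟨i.val, by have := i.isLt; omega⟩ : Fin (b + m - 1)).val < b
    from i.isLt)]
  rw [← hi]

lemma inj_on_D_iff {n m b : ℕ} (hm : 0 < m) (D : Finset (Fin n)) (hDb : D.card = b)
    (w : NCWord (n + m - 1)) :
    (∀ j k : Fin b, j ≠ k →
        w (embD hm D hDb ⟨j.val, by have := j.isLt; omega⟩)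
          ≠ w (embD hm D hDb ⟨k.val, by have := k.isLt; omega⟩))
      ↔ ∀ j ∈ D, ∀ k ∈ D, j ≠ k → w (castι hm j) ≠ w (castι hm k) := by
  constructor
  · intro h j hj k hk hjk
    obtain ⟨i1, he1, ho1⟩ := exists_embD_eq hm D hDb hj
    obtain ⟨i2, he2, ho2⟩ := exists_embD_eq hm D hDb hk
    have hne : i1 ≠ i2 := by
      intro hc; apply hjk; rw [← ho1, ← ho2, hc]
    have := h i1 i2 hne
    rwa [he1, he2] at this
  · intro h j k hjk
    have hj' : D.orderEmbOfFin hDb j ∈ D := Finset.orderEmbOfFin_mem D hDb j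
    have hk' : D.orderEmbOfFin hDb k ∈ D := Finset.orderEmbOfFin_mem D hDb k
    have hne : D.orderEmbOfFin hDb j ≠ D.orderEmbOfFin hDb k := by
      intro hc; exact hjk ((D.orderEmbOfFin hDb).injective hc)
    have := h _ hj' _ hk' hne
    rw [embD_lt hm D hDb (show (⟨j.val, by have := j.isLt; omega⟩ : Fin (b + m - 1)).val < b
      from j.isLt), embD_lt hm D hDb (show (⟨k.val, by have := k.isLt; omega⟩
        : Fin (b + m - 1)).val < b from k.isLt)]
    convert this using 3

end Apd
namespace Apd

/-! ### Combining a partition of `Fin n` with a partition of `Fin (b+m-1)` -/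

def cemb {n m : ℕ} (hm : 0 < m) : Fin n ↪ Fin (n + m - 1) :=
  ⟨castι hm, castι_injective hm⟩

def eembE {n m b : ℕ} (hm : 0 < m) (D : Finset (Fin n)) (hDb : D.card = b) :
    Fin (b + m - 1) ↪ Fin (n + m - 1) :=
  ⟨embD hm D hDb, embD_injective hm D hDb⟩

lemma castι_ne_embD {n m b : ℕ} (hm : 0 < m) (π : SetPtn n) {D : Finset (Fin n)}
    (hD : D ∈ π.parts) (hDb : D.card = b) {B : Finset (Fin n)} (hB : B ∈ π.parts.erase D)
    {u : Fin n} (hu : u ∈ B) (t : Fin (b + m - 1)) :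
    castι hm u ≠ embD hm D hDb t := by
  intro hc
  by_cases ht : t.val < b
  · rw [embD_lt hm D hDb ht] at hc
    have heq : u = D.orderEmbOfFin hDb ⟨t.val, ht⟩ := castι_injective hm hc
    have hmem : u ∈ D := heq ▸ Finset.orderEmbOfFin_mem D hDb ⟨t.val, ht⟩
    obtain ⟨hne, hBp⟩ := Finset.mem_erase.mp hB
    exact hne (π.eq_of_mem_parts hBp hD hu hmem)
  · rw [embD_ge hm D hDb ht] at hc
    have h1 : u.val = t.val - b + n := congrArg Fin.val hc
    have h2 := u.isLt
    omega

lemma disj_families {n m b : ℕ} (hm : 0 < m) (π : SetPtn n) {D : Finset (Fin n)}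
    (hD : D ∈ π.parts) (hDb : D.card = b) (σ : SetPtn (b + m - 1)) :
    Disjoint ((π.parts.erase D).map (Finset.mapEmbedding (cemb hm)).toEmbedding)
      (σ.parts.map (Finset.mapEmbedding (eembE hm D hDb)).toEmbedding) := by
  rw [Finset.disjoint_left]
  rintro P hP hQ
  obtain ⟨B, hB, hBe⟩ := Finset.mem_map.mp hP
  obtain ⟨S, hS, hSe⟩ := Finset.mem_map.mp hQ
  have hBe' : B.map (cemb hm) = P := hBe
  have hSe' : S.map (eembE hm D hDb) = P := hSe
  obtain ⟨t, ht⟩ := σ.nonempty_of_mem_parts hS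
  have hmem : (eembE hm D hDb) t ∈ B.map (cemb hm) := by
    rw [hBe', ← hSe']
    exact Finset.mem_map_of_mem _ ht
  obtain ⟨u, hu, huEq⟩ := Finset.mem_map.mp hmem
  exact castι_ne_embD hm π hD hDb hB hu t huEq

def combParts {n m b : ℕ} (hm : 0 < m) (π : SetPtn n) {D : Finset (Fin n)}
    (hD : D ∈ π.parts) (hDb : D.card = b) (σ : SetPtn (b + m - 1)) :
    Finset (Finset (Fin (n + m - 1))) :=
  ((π.parts.erase D).map (Finset.mapEmbedding (cemb hm)).toEmbedding).disjUnion
    (σ.parts.map (Finset.mapEmbedding (eembE hm D hDb)).toEmbedding)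
    (disj_families hm π hD hDb σ)

lemma mem_combParts {n m b : ℕ} (hm : 0 < m) (π : SetPtn n) {D : Finset (Fin n)}
    (hD : D ∈ π.parts) (hDb : D.card = b) (σ : SetPtn (b + m - 1))
    {P : Finset (Fin (n + m - 1))} :
    P ∈ combParts hm π hD hDb σ
      ↔ (∃ B ∈ π.parts.erase D, B.map (cemb hm) = P)
        ∨ (∃ S ∈ σ.parts, S.map (eembE hm D hDb) = P) := by
  unfold combParts
  rw [Finset.mem_disjUnion, Finset.mem_map, Finset.mem_map]
  constructor
  · rintro (⟨B, hB, hBe⟩ | ⟨S, hS, hSe⟩)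
    · exact Or.inl ⟨B, hB, hBe⟩
    · exact Or.inr ⟨S, hS, hSe⟩
  · rintro (⟨B, hB, hBe⟩ | ⟨S, hS, hSe⟩)
    · exact Or.inl ⟨B, hB, hBe⟩
    · exact Or.inr ⟨S, hS, hSe⟩

def combinePtn {n m b : ℕ} (hm : 0 < m) (π : SetPtn n) {D : Finset (Fin n)}
    (hD : D ∈ π.parts) (hDb : D.card = b) (σ : SetPtn (b + m - 1)) :
    SetPtn (n + m - 1) where
  parts := combParts hm π hD hDb σ
  supIndep := by
    rw [Finset.supIndep_iff_pairwiseDisjoint]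
    intro P hP Q hQ hne
    rw [Finset.mem_coe, mem_combParts hm π hD hDb σ] at hP hQ
    have key : ∀ x : Fin (n + m - 1), x ∈ P → x ∈ Q → False := by
      intro x hxP hxQ
      rcases hP with ⟨B1, hB1, rfl⟩ | ⟨S1, hS1, rfl⟩ <;>
        rcases hQ with ⟨B2, hB2, rfl⟩ | ⟨S2, hS2, rfl⟩
      · obtain ⟨u1, hu1, hu1e⟩ := Finset.mem_map.mp hxP
        obtain ⟨u2, hu2, hu2e⟩ := Finset.mem_map.mp hxQ
        have : u1 = u2 := (cemb hm).injective (hu1e.trans hu2e.symm)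
        subst this
        exact hne (congrArg (fun T => Finset.map (cemb hm) T)
          (π.eq_of_mem_parts (Finset.mem_of_mem_erase hB1) (Finset.mem_of_mem_erase hB2) hu1 hu2))
      · obtain ⟨u1, hu1, hu1e⟩ := Finset.mem_map.mp hxP
        obtain ⟨t2, ht2, ht2e⟩ := Finset.mem_map.mp hxQ
        exact castι_ne_embD hm π hD hDb hB1 hu1 t2 (hu1e.trans ht2e.symm)
      · obtain ⟨t1, ht1, ht1e⟩ := Finset.mem_map.mp hxP
        obtain ⟨u2, hu2, hu2e⟩ := Finset.mem_map.mp hxQ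
        exact castι_ne_embD hm π hD hDb hB2 hu2 t1 (hu2e.trans ht1e.symm)
      · obtain ⟨t1, ht1, ht1e⟩ := Finset.mem_map.mp hxP
        obtain ⟨t2, ht2, ht2e⟩ := Finset.mem_map.mp hxQ
        have : t1 = t2 := (eembE hm D hDb).injective (ht1e.trans ht2e.symm)
        subst this
        exact hne (congrArg (fun T => Finset.map (eembE hm D hDb) T)
          (σ.eq_of_mem_parts hS1 hS2 ht1 ht2))
    simp only [Function.onFun, id_eq]
    rw [Finset.disjoint_left]
    intro x hx hx'
    exact key x hx hx'
  sup_parts := by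
    rw [← Finset.top_eq_univ]
    refine le_antisymm le_top ?_
    intro x _
    rw [Finset.mem_sup]
    by_cases hx : x.val < n
    · set x' : Fin n := ⟨x.val, hx⟩ with hx'def
      have hcx : castι hm x' = x := Fin.ext rfl
      by_cases hxD : x' ∈ D
      · obtain ⟨i, hie, _⟩ := exists_embD_eq hm D hDb hxD
        set t : Fin (b + m - 1) := ⟨i.val, by have := i.isLt; omega⟩ with htdef
        refine ⟨(blockOf σ t).map (eembE hm D hDb),
          (mem_combParts hm π hD hDb σ).mpr (Or.inr ⟨_, blockOf_mem_parts σ t, rfl⟩), ?_⟩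
        rw [← hcx, ← hie]
        exact Finset.mem_map_of_mem _ (mem_blockOf σ t)
      · have hBmem : blockOf π x' ∈ π.parts.erase D := by
          rw [Finset.mem_erase]
          exact ⟨fun hc => hxD (hc ▸ mem_blockOf π x'), blockOf_mem_parts π x'⟩
        refine ⟨(blockOf π x').map (cemb hm),
          (mem_combParts hm π hD hDb σ).mpr (Or.inl ⟨_, hBmem, rfl⟩), ?_⟩
        rw [← hcx]
        exact Finset.mem_map_of_mem _ (mem_blockOf π x')
    · have hxlt := x.isLt
      set t : Fin (b + m - 1) := ⟨x.val - n + b, by omega⟩ with htdef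
      have het : embD hm D hDb t = x := by
        rw [embD_ge hm D hDb (by simp only [htdef]; omega)]
        exact Fin.ext (by simp only [htdef, Fin.val_mk]; omega)
      refine ⟨(blockOf σ t).map (eembE hm D hDb),
        (mem_combParts hm π hD hDb σ).mpr (Or.inr ⟨_, blockOf_mem_parts σ t, rfl⟩), ?_⟩
      rw [← het]
      exact Finset.mem_map_of_mem _ (mem_blockOf σ t)
  bot_notMem := by
    intro h
    rcases (mem_combParts hm π hD hDb σ).mp h with ⟨B, hB, hBe⟩ | ⟨S, hS, hSe⟩
    · have hBemp : B = ∅ := Finset.map_eq_empty.mp hBe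
      apply π.bot_notMem
      rw [Finset.bot_eq_empty, ← hBemp]
      exact Finset.mem_of_mem_erase hB
    · have hSemp : S = ∅ := Finset.map_eq_empty.mp hSe
      apply σ.bot_notMem
      rw [Finset.bot_eq_empty, ← hSemp]
      exact hS

lemma mem_combinePtn_parts {n m b : ℕ} (hm : 0 < m) (π : SetPtn n) {D : Finset (Fin n)}
    (hD : D ∈ π.parts) (hDb : D.card = b) (σ : SetPtn (b + m - 1))
    {P : Finset (Fin (n + m - 1))} :
    P ∈ (combinePtn hm π hD hDb σ).parts
      ↔ (∃ B ∈ π.parts.erase D, B.map (cemb hm) = P)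
        ∨ (∃ S ∈ σ.parts, S.map (eembE hm D hDb) = P) :=
  mem_combParts hm π hD hDb σ

end Apd
namespace Apd

lemma eSP_combinePtn {n m b : ℕ} (hm : 0 < m) (π : SetPtn n) {D : Finset (Fin n)}
    (hD : D ∈ π.parts) (hDb : D.card = b) (σ : SetPtn (b + m - 1)) (w : NCWord (n + m - 1)) :
    eSP (combinePtn hm π hD hDb σ) w
      = eSP σ (fun t => w (embD hm D hDb t))
        * (if ∀ B ∈ π.parts.erase D, ∀ j ∈ B, ∀ k ∈ B, j ≠ k → w (castι hm j) ≠ w (castι hm k)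
           then (1:ℚ) else 0) := by
  unfold eSP
  rw [ite_mul_ite]
  refine if_congr ?_ rfl rfl
  constructor
  · intro h
    constructor
    · rintro j k hjk ⟨S, hS, hjS, hkS⟩
      refine h (embD hm D hDb j) (embD hm D hDb k)
        (fun hc => hjk (embD_injective hm D hDb hc)) ?_
      exact ⟨S.map (eembE hm D hDb),
        (mem_combinePtn_parts hm π hD hDb σ).mpr (Or.inr ⟨S, hS, rfl⟩),
        Finset.mem_map_of_mem _ hjS, Finset.mem_map_of_mem _ hkS⟩
    · intro B hB j hj k hk hjk
      refine h (castι hm j) (castι hm k) (fun hc => hjk (castι_injective hm hc)) ?_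
      exact ⟨B.map (cemb hm),
        (mem_combinePtn_parts hm π hD hDb σ).mpr (Or.inl ⟨B, hB, rfl⟩),
        Finset.mem_map_of_mem _ hj, Finset.mem_map_of_mem _ hk⟩
  · rintro ⟨h2, h1⟩ j k hjk ⟨P, hP, hjP, hkP⟩
    rcases (mem_combinePtn_parts hm π hD hDb σ).mp hP with ⟨B, hB, hBe⟩ | ⟨S, hS, hSe⟩
    · subst hBe
      obtain ⟨j0, hj0, rfl⟩ := Finset.mem_map.mp hjP
      obtain ⟨k0, hk0, rfl⟩ := Finset.mem_map.mp hkP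
      exact h1 B hB j0 hj0 k0 hk0 (fun hc => hjk (by rw [hc]))
    · subst hSe
      obtain ⟨j0, hj0, rfl⟩ := Finset.mem_map.mp hjP
      obtain ⟨k0, hk0, rfl⟩ := Finset.mem_map.mp hkP
      exact h2 j0 k0 (fun hc => hjk (by rw [hc])) ⟨S, hS, hj0, hk0⟩

lemma blockOf_combinePtn_last {n m b : ℕ} (hn : 0 < n) (hm : 0 < m) (π : SetPtn n)
    {D : Finset (Fin n)} (hD : D ∈ π.parts) (hDb : D.card = b) (σ : SetPtn (b + m - 1))
    (hb : 0 < b) (hlast : lastN n hn ∈ D) :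
    blockOf (combinePtn hm π hD hDb σ) (lastN (n + m - 1) (by omega))
      = (blockOf σ (lastN (b + m - 1) (by omega))).map (eembE hm D hDb) := by
  apply blockOf_eq_of_mem
  · exact (mem_combinePtn_parts hm π hD hDb σ).mpr
      (Or.inr ⟨_, blockOf_mem_parts σ _, rfl⟩)
  · rw [← embD_lastN hn hm D hDb hb hlast]
    exact Finset.mem_map_of_mem _ (mem_blockOf σ _)

lemma disjUnion_val' {α : Type*} (s t : Finset α) (h : Disjoint s t) :
    (s.disjUnion t h).val = s.val + t.val := rfl

lemma ptype_combinePtn {n m b : ℕ} (hn : 0 < n) (hm : 0 < m) (π : SetPtn n)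
    {D : Finset (Fin n)} (hD : D ∈ π.parts) (hDb : D.card = b) (σ : SetPtn (b + m - 1))
    (hb : 0 < b) (hlast : lastN n hn ∈ D) :
    ptype (combinePtn hm π hD hDb σ) (lastN (n + m - 1) (by omega))
      = ((π.parts.erase D).val.map Finset.card
          + (ptype σ (lastN (b + m - 1) (by omega))).1,
         (ptype σ (lastN (b + m - 1) (by omega))).2) := by
  have hblk := blockOf_combinePtn_last hn hm π hD hDb σ hb hlast
  set Dσ := blockOf σ (lastN (b + m - 1) (by omega : 0 < b + m - 1)) with hDσ
  set X : Finset (Fin (n + m - 1)) := Dσ.map (eembE hm D hDb) with hX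
  have hXnotleft : X ∉ (π.parts.erase D).map (Finset.mapEmbedding (cemb hm)).toEmbedding := by
    intro h
    obtain ⟨B, hB, hBe⟩ := Finset.mem_map.mp h
    have hBe' : B.map (cemb hm) = X := hBe
    obtain ⟨t, ht⟩ := σ.nonempty_of_mem_parts (blockOf_mem_parts σ _)
    have hmem : (eembE hm D hDb) t ∈ B.map (cemb hm) := by
      rw [hBe', hX]
      exact Finset.mem_map_of_mem _ ht
    obtain ⟨u, hu, huEq⟩ := Finset.mem_map.mp hmem
    exact castι_ne_embD hm π hD hDb hB hu t huEq
  have hXmem : X ∈ σ.parts.map (Finset.mapEmbedding (eembE hm D hDb)).toEmbedding := by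
    refine Finset.mem_map.mpr ⟨Dσ, blockOf_mem_parts σ _, rfl⟩
  have hdisj' : Disjoint ((π.parts.erase D).map (Finset.mapEmbedding (cemb hm)).toEmbedding)
      ((σ.parts.map (Finset.mapEmbedding (eembE hm D hDb)).toEmbedding).erase X) :=
    (disj_families hm π hD hDb σ).mono_right (Finset.erase_subset _ _)
  have herase : (combParts hm π hD hDb σ).erase X
      = ((π.parts.erase D).map (Finset.mapEmbedding (cemb hm)).toEmbedding).disjUnion
          ((σ.parts.map (Finset.mapEmbedding (eembE hm D hDb)).toEmbedding).erase X) hdisj' := by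
    ext Q
    simp only [Finset.mem_erase, Finset.mem_disjUnion, combParts]
    constructor
    · rintro ⟨hne, hQ | hQ⟩
      · exact Or.inl hQ
      · exact Or.inr ⟨hne, hQ⟩
    · rintro (hQ | ⟨hne, hQ⟩)
      · exact ⟨fun hc => hXnotleft (hc ▸ hQ), Or.inl hQ⟩
      · exact ⟨hne, Or.inr hQ⟩
  have herase2 : (σ.parts.map (Finset.mapEmbedding (eembE hm D hDb)).toEmbedding).erase X
      = (σ.parts.erase Dσ).map (Finset.mapEmbedding (eembE hm D hDb)).toEmbedding := by
    rw [Finset.map_erase]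
    rfl
  unfold ptype
  rw [hblk]
  refine Prod.ext ?_ ?_
  · show ((combinePtn hm π hD hDb σ).parts.erase X).val.map Finset.card = _
    have hparts : (combinePtn hm π hD hDb σ).parts = combParts hm π hD hDb σ := rfl
    rw [hparts, herase, disjUnion_val', herase2]
    rw [Multiset.map_add]
    have e1 : Multiset.map Finset.card
        ((π.parts.erase D).map (Finset.mapEmbedding (cemb hm)).toEmbedding).val
        = (π.parts.erase D).val.map Finset.card := by
      rw [Finset.map_val, Multiset.map_map]
      refine Multiset.map_congr rfl fun B _ => ?_
      exact Finset.card_map _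
    have e2 : Multiset.map Finset.card
        ((σ.parts.erase Dσ).map (Finset.mapEmbedding (eembE hm D hDb)).toEmbedding).val
        = (σ.parts.erase Dσ).val.map Finset.card := by
      rw [Finset.map_val, Multiset.map_map]
      refine Multiset.map_congr rfl fun S _ => ?_
      exact Finset.card_map _
    rw [e1, e2]
    try rfl
  · show (Dσ.map (eembE hm D hDb)).card = _
    rw [Finset.card_map]
    try rfl

end Apd
namespace Apd

lemma ind_eq_ind_iff {P Q : Prop} [Decidable P] [Decidable Q]
    (h : (if P then (1:ℚ) else 0) = if Q then 1 else 0) : P ↔ Q := by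
  by_cases hP : P <;> by_cases hQ : Q <;> simp_all

lemma concat_cond_iff {p q : ℕ} (hp : 0 < p) (hq : 0 < q) (G : SimpleGraph (Fin p))
    (H : SimpleGraph (Fin q)) (w : NCWord (p + q - 1)) :
    (∀ j k : Fin (p + q - 1), (concatG G H).Adj j k → w j ≠ w k)
      ↔ ((∀ j k : Fin p, G.Adj j k →
            w ⟨j.val, by have := j.isLt; omega⟩ ≠ w ⟨k.val, by have := k.isLt; omega⟩)
        ∧ (∀ j k : Fin q, H.Adj j k →
            w ⟨j.val + (p - 1), by have := j.isLt; omega⟩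
              ≠ w ⟨k.val + (p - 1), by have := k.isLt; omega⟩)) := by
  refine ind_eq_ind_iff ?_
  rw [← ite_mul_ite]
  exact YG_concat hp hq G H w

lemma sameBlock_cond_iff {d : ℕ} (π : SetPtn d) {D : Finset (Fin d)} (hD : D ∈ π.parts)
    (v : NCWord d) :
    (∀ j k : Fin d, j ≠ k → sameBlock π j k → v j ≠ v k)
      ↔ ((∀ B ∈ π.parts.erase D, ∀ j ∈ B, ∀ k ∈ B, j ≠ k → v j ≠ v k)
        ∧ (∀ j ∈ D, ∀ k ∈ D, j ≠ k → v j ≠ v k)) := by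
  constructor
  · intro h
    exact ⟨fun B hB j hj k hk hjk => h j k hjk ⟨B, Finset.mem_of_mem_erase hB, hj, hk⟩,
      fun j hj k hk hjk => h j k hjk ⟨D, hD, hj, hk⟩⟩
  · rintro ⟨h1, h2⟩ j k hjk ⟨B, hB, hj, hk⟩
    by_cases hBD : B = D
    · exact h2 j (hBD ▸ hj) k (hBD ▸ hk) hjk
    · exact h1 B (Finset.mem_erase.mpr ⟨hBD, hB⟩) j hj k hk hjk

def shiftχ {n m : ℕ} (hn : 0 < n) (hm : 0 < m) (Hg : SimpleGraph (Fin m)) :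
    NCWord (n + m - 1) → ℚ :=
  fun w => YG Hg (fun t => w ⟨t.val + (n - 1), by have := t.isLt; omega⟩)

def nonDχ {n m : ℕ} (hm : 0 < m) (π : SetPtn n) (D : Finset (Fin n)) :
    NCWord (n + m - 1) → ℚ :=
  fun w =>
    if ∀ B ∈ π.parts.erase D, ∀ j ∈ B, ∀ k ∈ B, j ≠ k → w (castι hm j) ≠ w (castι hm k)
    then 1 else 0

lemma key_pointwise {n m b : ℕ} (hn : 0 < n) (hm : 0 < m) (π : SetPtn n)
    {D : Finset (Fin n)} (hD : D = blockOf π (lastN n hn)) (hDb : D.card = b)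
    (Hg : SimpleGraph (Fin m)) (w : NCWord (n + m - 1)) :
    eSP π (fun t => w (castι hm t)) * shiftχ hn hm Hg w
      = YG (concatG (⊤ : SimpleGraph (Fin b)) Hg) (fun t => w (embD hm D hDb t))
        * nonDχ hm π D w := by
  have hDmem : D ∈ π.parts := hD ▸ blockOf_mem_parts π _
  have hlast : lastN n hn ∈ D := hD ▸ mem_blockOf π _
  have hb : 0 < b := hDb ▸ Finset.card_pos.mpr ⟨_, hlast⟩
  unfold eSP shiftχ nonDχ YG
  rw [ite_mul_ite, ite_mul_ite]
  refine if_congr ?_ rfl rfl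
  -- abbreviations for the four conditions
  have hsplit := concat_cond_iff hb hm (⊤ : SimpleGraph (Fin b)) Hg
    (fun t => w (embD hm D hDb t))
  have hπ := sameBlock_cond_iff π hDmem (fun t => w (castι hm t))
  have hQD := inj_on_D_iff hm D hDb w
  constructor
  · rintro ⟨hPπ, hPH⟩
    obtain ⟨hQ1, hQDc⟩ := hπ.mp hPπ
    refine ⟨hsplit.mpr ⟨?_, ?_⟩, hQ1⟩
    · intro j k hadj
      have hjk : j ≠ k := by simpa using hadj
      exact hQD.mpr hQDc j k hjk
    · intro j k hadj
      have h := hPH j k hadj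
      have e1 := congrArg w (embD_tail hn hm D hDb hb hlast j)
      have e2 := congrArg w (embD_tail hn hm D hDb hb hlast k)
      exact fun hc => h ((e1.symm.trans hc).trans e2)
  · rintro ⟨hPc, hQ1⟩
    obtain ⟨hQtop, hQH⟩ := hsplit.mp hPc
    constructor
    · refine hπ.mpr ⟨hQ1, ?_⟩
      refine hQD.mp ?_
      intro j k hjk
      exact hQtop j k (by simpa using hjk)
    · intro j k hadj
      have h := hQH j k hadj
      have e1 := congrArg w (embD_tail hn hm D hDb hb hlast j)
      have e2 := congrArg w (embD_tail hn hm D hDb hb hlast k)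
      exact fun hc => h ((e1.trans hc).trans e2.symm)

end Apd
namespace Apd

lemma pullMul_nonD_mem_ksub {n m b : ℕ} (hn : 0 < n) (hm : 0 < m) (π : SetPtn n)
    {D : Finset (Fin n)} (hD : D = blockOf π (lastN n hn)) (hDb : D.card = b)
    (hN : 0 < n + m - 1) (hnb : 0 < b + m - 1)
    {f : Md (b + m - 1)} (hf : f ∈ Ksub (lastN (b + m - 1) hnb)) :
    pullMul (embD hm D hDb) (nonDχ hm π D) f ∈ Ksub (lastN (n + m - 1) hN) := by
  have hDmem : D ∈ π.parts := hD ▸ blockOf_mem_parts π _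
  have hlast : lastN n hn ∈ D := hD ▸ mem_blockOf π _
  have hb : 0 < b := hDb ▸ Finset.card_pos.mpr ⟨_, hlast⟩
  have hf' : f ∈ Submodule.span ℚ
      {g : Md (b + m - 1) | ∃ π₁ π₂ : SetPtn (b + m - 1),
        ptype π₁ (lastN (b + m - 1) hnb) = ptype π₂ (lastN (b + m - 1) hnb)
          ∧ g = eSP π₁ - eSP π₂} := hf
  refine Submodule.span_induction
    (p := fun x _ => pullMul (embD hm D hDb) (nonDχ hm π D) x ∈ Ksub (lastN (n + m - 1) hN))
    ?_ ?_ ?_ ?_ hf'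
  · rintro x ⟨σ1, σ2, hty, rfl⟩
    rw [map_sub]
    have h1 : pullMul (embD hm D hDb) (nonDχ hm π D) (eSP σ1)
        = eSP (combinePtn hm π hDmem hDb σ1) := by
      funext w
      rw [pullMul_apply, eSP_combinePtn hm π hDmem hDb σ1 w]
      try rfl
    have h2 : pullMul (embD hm D hDb) (nonDχ hm π D) (eSP σ2)
        = eSP (combinePtn hm π hDmem hDb σ2) := by
      funext w
      rw [pullMul_apply, eSP_combinePtn hm π hDmem hDb σ2 w]
      try rfl
    rw [h1, h2]
    apply Submodule.subset_span
    refine ⟨_, _, ?_, rfl⟩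
    have e1 : ptype (combinePtn hm π hDmem hDb σ1) (lastN (n + m - 1) hN)
        = ((π.parts.erase D).val.map Finset.card
            + (ptype σ1 (lastN (b + m - 1) hnb)).1,
           (ptype σ1 (lastN (b + m - 1) hnb)).2) :=
      ptype_combinePtn hn hm π hDmem hDb σ1 hb hlast
    have e2 : ptype (combinePtn hm π hDmem hDb σ2) (lastN (n + m - 1) hN)
        = ((π.parts.erase D).val.map Finset.card
            + (ptype σ2 (lastN (b + m - 1) hnb)).1,
           (ptype σ2 (lastN (b + m - 1) hnb)).2) :=
      ptype_combinePtn hn hm π hDmem hDb σ2 hb hlast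
    rw [e1, e2, hty]
  · simp only [map_zero]
    exact Submodule.zero_mem _
  · intro x y _ _ ihx ihy
    rw [map_add]
    exact Submodule.add_mem _ ihx ihy
  · intro r x _ ih
    rw [map_smul]
    exact Submodule.smul_mem _ _ ih

lemma pullMul_eSP_mem_cone {n m : ℕ} (hn : 0 < n) (hm : 0 < m) (Hg : SimpleGraph (Fin m))
    (hN : 0 < n + m - 1)
    (hKC : ∀ b : ℕ, ∀ _ : 0 < b, ∀ hnb : 0 < b + m - 1,
      YG (concatG (⊤ : SimpleGraph (Fin b)) Hg) ∈ Cone (lastN (b + m - 1) hnb))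
    (π : SetPtn n) :
    pullMul (castι hm) (shiftχ hn hm Hg) (eSP π) ∈ Cone (lastN (n + m - 1) hN) := by
  set D := blockOf π (lastN n hn) with hD
  have hDmem : D ∈ π.parts := blockOf_mem_parts π _
  have hlast : lastN n hn ∈ D := mem_blockOf π _
  have hb : 0 < D.card := Finset.card_pos.mpr ⟨_, hlast⟩
  have hnb : 0 < D.card + m - 1 := by omega
  have hφ : pullMul (castι hm) (shiftχ hn hm Hg) (eSP π)
      = pullMul (embD hm D rfl) (nonDχ hm π D)
          (YG (concatG (⊤ : SimpleGraph (Fin D.card)) Hg)) :=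
    funext fun w => key_pointwise hn hm π hD rfl Hg w
  rw [hφ]
  obtain ⟨s, c, hc, hk⟩ := hKC D.card hb hnb
  have hY : YG (concatG (⊤ : SimpleGraph (Fin D.card)) Hg)
      = (∑ σ ∈ s, c σ • eSP σ)
        + (YG (concatG (⊤ : SimpleGraph (Fin D.card)) Hg) - ∑ σ ∈ s, c σ • eSP σ) := by
    abel
  rw [hY, map_add, map_sum]
  refine add_mem_cone ?_ (ksub_mem_cone (pullMul_nonD_mem_ksub hn hm π hD rfl hN hnb hk))
  have hsum : ∑ σ ∈ s, pullMul (embD hm D rfl) (nonDχ hm π D) (c σ • eSP σ)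
      = ∑ σ ∈ s, c σ • eSP (combinePtn hm π hDmem rfl σ) := by
    refine Finset.sum_congr rfl fun σ _ => ?_
    rw [map_smul]
    congr 1
    funext w
    rw [pullMul_apply, eSP_combinePtn hm π hDmem rfl σ w]
    try rfl
  rw [hsum]
  exact sum_mem_cone s c _ hc fun σ _ => eSP_mem_cone _ _

lemma pullMul_shift_mem_ksub {n m : ℕ} (hn : 0 < n) (hm : 0 < m) (Hg : SimpleGraph (Fin m))
    (hN : 0 < n + m - 1)
    (hKC : ∀ b : ℕ, ∀ _ : 0 < b, ∀ hnb : 0 < b + m - 1,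
      YG (concatG (⊤ : SimpleGraph (Fin b)) Hg) ∈ Cone (lastN (b + m - 1) hnb))
    {f : Md n} (hf : f ∈ Ksub (lastN n hn)) :
    pullMul (castι hm) (shiftχ hn hm Hg) f ∈ Ksub (lastN (n + m - 1) hN) := by
  have hf' : f ∈ Submodule.span ℚ
      {g : Md n | ∃ π₁ π₂ : SetPtn n,
        ptype π₁ (lastN n hn) = ptype π₂ (lastN n hn) ∧ g = eSP π₁ - eSP π₂} := hf
  refine Submodule.span_induction
    (p := fun x _ => pullMul (castι hm) (shiftχ hn hm Hg) x ∈ Ksub (lastN (n + m - 1) hN))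
    ?_ ?_ ?_ ?_ hf'
  · rintro x ⟨π1, π2, hty, rfl⟩
    set D1 := blockOf π1 (lastN n hn) with hD1
    set D2 := blockOf π2 (lastN n hn) with hD2
    have hmem1 : D1 ∈ π1.parts := blockOf_mem_parts π1 _
    have hmem2 : D2 ∈ π2.parts := blockOf_mem_parts π2 _
    have hlast1 : lastN n hn ∈ D1 := mem_blockOf π1 _
    have hlast2 : lastN n hn ∈ D2 := mem_blockOf π2 _
    have hb : 0 < D1.card := Finset.card_pos.mpr ⟨_, hlast1⟩
    have hDb2 : D2.card = D1.card := (congrArg Prod.snd hty).symm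
    have hnb : 0 < D1.card + m - 1 := by omega
    have k1 : pullMul (castι hm) (shiftχ hn hm Hg) (eSP π1)
        = pullMul (embD hm D1 rfl) (nonDχ hm π1 D1)
            (YG (concatG (⊤ : SimpleGraph (Fin D1.card)) Hg)) :=
      funext fun w => key_pointwise hn hm π1 hD1 rfl Hg w
    have k2 : pullMul (castι hm) (shiftχ hn hm Hg) (eSP π2)
        = pullMul (embD hm D2 hDb2) (nonDχ hm π2 D2)
            (YG (concatG (⊤ : SimpleGraph (Fin D1.card)) Hg)) :=
      funext fun w => key_pointwise hn hm π2 hD2 hDb2 Hg w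
    rw [map_sub, k1, k2]
    obtain ⟨s, c, hc, hk⟩ := hKC D1.card hb hnb
    have hY : YG (concatG (⊤ : SimpleGraph (Fin D1.card)) Hg)
        = (∑ σ ∈ s, c σ • eSP σ)
          + (YG (concatG (⊤ : SimpleGraph (Fin D1.card)) Hg) - ∑ σ ∈ s, c σ • eSP σ) := by
      abel
    rw [hY, map_add, map_add, add_sub_add_comm]
    have hAB : pullMul (embD hm D1 rfl) (nonDχ hm π1 D1) (∑ σ ∈ s, c σ • eSP σ)
        - pullMul (embD hm D2 hDb2) (nonDχ hm π2 D2) (∑ σ ∈ s, c σ • eSP σ)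
        = ∑ σ ∈ s, c σ • (eSP (combinePtn hm π1 hmem1 rfl σ)
            - eSP (combinePtn hm π2 hmem2 hDb2 σ)) := by
      rw [map_sum, map_sum, ← Finset.sum_sub_distrib]
      refine Finset.sum_congr rfl fun σ _ => ?_
      rw [map_smul, map_smul, ← smul_sub]
      congr 1
      have h1 : pullMul (embD hm D1 rfl) (nonDχ hm π1 D1) (eSP σ)
          = eSP (combinePtn hm π1 hmem1 rfl σ) := by
        funext w
        rw [pullMul_apply, eSP_combinePtn hm π1 hmem1 rfl σ w]
        try rfl
      have h2 : pullMul (embD hm D2 hDb2) (nonDχ hm π2 D2) (eSP σ)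
          = eSP (combinePtn hm π2 hmem2 hDb2 σ) := by
        funext w
        rw [pullMul_apply, eSP_combinePtn hm π2 hmem2 hDb2 σ w]
        try rfl
      rw [h1, h2]
    rw [hAB]
    refine Submodule.add_mem _ (Submodule.sum_mem _ ?_)
      (Submodule.sub_mem _ (pullMul_nonD_mem_ksub hn hm π1 hD1 rfl hN hnb hk)
        (pullMul_nonD_mem_ksub hn hm π2 hD2 hDb2 hN hnb hk))
    intro σ _
    refine Submodule.smul_mem _ _ ?_
    refine Submodule.subset_span ⟨_, _, ?_, rfl⟩
    have e1 : ptype (combinePtn hm π1 hmem1 rfl σ) (lastN (n + m - 1) hN)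
        = ((π1.parts.erase D1).val.map Finset.card
            + (ptype σ (lastN (D1.card + m - 1) hnb)).1,
           (ptype σ (lastN (D1.card + m - 1) hnb)).2) :=
      ptype_combinePtn hn hm π1 hmem1 rfl σ hb hlast1
    have e2 : ptype (combinePtn hm π2 hmem2 hDb2 σ) (lastN (n + m - 1) hN)
        = ((π2.parts.erase D2).val.map Finset.card
            + (ptype σ (lastN (D1.card + m - 1) hnb)).1,
           (ptype σ (lastN (D1.card + m - 1) hnb)).2) :=
      ptype_combinePtn hn hm π2 hmem2 hDb2 σ hb hlast2
    rw [e1, e2]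
    have hfst : (π1.parts.erase D1).val.map Finset.card
        = (π2.parts.erase D2).val.map Finset.card := congrArg Prod.fst hty
    rw [hfst]
  · simp only [map_zero]
    exact Submodule.zero_mem _
  · intro x y _ _ ihx ihy
    rw [map_add]
    exact Submodule.add_mem _ ihx ihy
  · intro r x _ ih
    rw [map_smul]
    exact Submodule.smul_mem _ _ ih

lemma top_eposNC (d : ℕ) (hd : 0 < d) (a : Fin d) :
    IsEPosNCAt (⊤ : SimpleGraph (Fin d)) a := by
  haveI : Nonempty (Fin d) := ⟨⟨0, hd⟩⟩
  have hne : (Finset.univ : Finset (Fin d)) ≠ (⊥ : Finset (Fin d)) := by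
    simpa using Finset.univ_nonempty.ne_empty
  refine ⟨{Finpartition.indiscrete hne}, fun _ => 1, fun _ => zero_le_one, ?_⟩
  have hYe : YG (⊤ : SimpleGraph (Fin d)) = eSP (Finpartition.indiscrete hne) := by
    funext w
    have hcond : (∀ j k : Fin d, (⊤ : SimpleGraph (Fin d)).Adj j k → w j ≠ w k)
        ↔ ∀ j k : Fin d, j ≠ k → sameBlock (Finpartition.indiscrete hne) j k → w j ≠ w k := by
      constructor
      · intro h j k hjk _
        exact h j k (by simpa using hjk)
      · intro h j k hadj
        have hjk : j ≠ k := by simpa using hadj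
        refine h j k hjk ⟨Finset.univ, ?_, Finset.mem_univ j, Finset.mem_univ k⟩
        exact Finset.mem_singleton_self _
    unfold YG eSP
    simp only [hcond]
  rw [Finset.sum_singleton, one_smul, hYe, sub_self]
  exact Submodule.zero_mem _

end Apd

theorem stmt11 (H : LGraph) :
    H.Appendable ↔
      ∀ (d : ℕ) (hd : 0 < d),
        ((LGraph.mk d hd (⊤ : SimpleGraph (Fin d))).concat H).EPosNC := by
  constructor
  · intro hApp d hd
    exact hApp ⟨d, hd, ⊤⟩ (Apd.top_eposNC d hd _)
  · intro hK A hA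
    have hn := A.npos
    have hm := H.npos
    have hN : 0 < A.n + H.n - 1 := by omega
    have hKC : ∀ b : ℕ, ∀ _ : 0 < b, ∀ hnb : 0 < b + H.n - 1,
        YG (concatG (⊤ : SimpleGraph (Fin b)) H.G)
          ∈ Apd.Cone (Apd.lastN (b + H.n - 1) hnb) :=
      fun b hb _ => hK b hb
    show IsEPosNCAt (A.concat H).G (A.concat H).last
    have hgoal : YG (concatG A.G H.G) ∈ Apd.Cone (Apd.lastN (A.n + H.n - 1) hN) := by
      have hφ : YG (concatG A.G H.G)
          = Apd.pullMul (Apd.castι hm) (Apd.shiftχ hn hm H.G) (YG A.G) :=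
        funext fun w => Apd.YG_concat hn hm A.G H.G w
      obtain ⟨s, c, hc, hk⟩ := hA
      have hk' : YG A.G - ∑ π ∈ s, c π • eSP π ∈ Ksub (Apd.lastN A.n hn) := hk
      have hY : YG A.G
          = (∑ π ∈ s, c π • eSP π) + (YG A.G - ∑ π ∈ s, c π • eSP π) := by abel
      rw [hφ, hY, map_add, map_sum]
      refine Apd.add_mem_cone ?_
        (Apd.ksub_mem_cone (Apd.pullMul_shift_mem_ksub hn hm H.G hN hKC hk'))
      have hsum : ∑ π ∈ s, Apd.pullMul (Apd.castι hm) (Apd.shiftχ hn hm H.G) (c π • eSP π)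
          = ∑ π ∈ s, c π • Apd.pullMul (Apd.castι hm) (Apd.shiftχ hn hm H.G) (eSP π) := by
        refine Finset.sum_congr rfl fun π _ => ?_
        rw [map_smul]
      rw [hsum]
      exact Apd.sum_mem_cone s c _ hc fun π _ => Apd.pullMul_eSP_mem_cone hn hm H.G hN hKC π
    exact hgoal
end
end

section
/- Let G and G′ be (e)-positive labelled graphs and let H_1, …, H_k (k ≥ 0) be appendable (e)-positive labelled graphs. Then the concatenation G + H_1 + ⋯ + H_k + (G′)^r is e-positive (when k = 0 this is the concatenation G + (G′)^r). -/
open scoped Classical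
noncomputable section

open Finset MvPolynomial

def ee (n r : ℕ) : MvPolynomial (Fin n) ℚ := esymm (Fin n) ℚ r

lemma ee_def (n r : ℕ) : ee n r = ∑ S ∈ powersetCard r univ, ∏ i ∈ S, X i := rfl

def eAv {n : ℕ} (y : Fin n) (r : ℕ) : MvPolynomial (Fin n) ℚ :=
  ∑ S ∈ powersetCard r (univ.erase y), ∏ i ∈ S, X i

lemma eAv_zero {n : ℕ} (y : Fin n) : eAv y 0 = 1 := by
  simp [eAv]

lemma eAv_of_big {n : ℕ} (y : Fin n) (r : ℕ) (h : n ≤ r) : eAv y r = 0 := by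
  have hc : (univ.erase y).card < r := by
    rw [card_erase_of_mem (mem_univ y), card_univ, Fintype.card_fin]
    have : 0 < n := y.pos
    omega
  rw [eAv, Finset.powersetCard_eq_empty.2 hc, Finset.sum_empty]

lemma ee_of_big {n r : ℕ} (h : n < r) : ee n r = 0 := by
  have hc : (univ : Finset (Fin n)).card < r := by
    rw [card_univ, Fintype.card_fin]; omega
  rw [ee_def, Finset.powersetCard_eq_empty.2 hc, Finset.sum_empty]

/-- I1 -/
lemma esymm_split {n : ℕ} (y : Fin n) (r : ℕ) :
    ee n (r+1) = eAv y (r+1) + X y * eAv y r := by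
  have hy : y ∉ univ.erase y := notMem_erase _ _
  have huniv : (univ : Finset (Fin n)) = insert y (univ.erase y) :=
    (insert_erase (mem_univ y)).symm
  rw [ee_def, eAv, eAv]
  conv_lhs => rw [huniv]
  rw [Finset.powersetCard_succ_insert hy, Finset.sum_union, Finset.mul_sum]
  · congr 1
    rw [Finset.sum_image]
    · apply Finset.sum_congr rfl
      intro S hS
      rw [mem_powersetCard] at hS
      have hyS : y ∉ S := fun hmem => hy (hS.1 hmem)
      rw [Finset.prod_insert hyS]
    · intro S hS T hT hST
      rw [Finset.mem_coe, mem_powersetCard] at hS hT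
      have hyS : y ∉ S := fun hmem => hy (hS.1 hmem)
      have hyT : y ∉ T := fun hmem => hy (hT.1 hmem)
      have := congrArg (fun U => Finset.erase U y) hST
      simpa [Finset.erase_insert hyS, Finset.erase_insert hyT] using this
  · rw [Finset.disjoint_left]
    intro S hS hS'
    rw [mem_powersetCard] at hS
    obtain ⟨T, hT, rfl⟩ := Finset.mem_image.1 hS'
    exact hy (hS.1 (mem_insert_self y T))

/-- I2 -/
lemma sum_eAv {n : ℕ} (s : ℕ) :
    ∑ y : Fin n, eAv y s = ((n - s : ℕ) : ℚ) • ee n s := by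
  unfold eAv
  rw [Finset.sum_comm' (t' := powersetCard s univ)
      (s' := fun S => univ \ S) (f := fun y S => ∏ i ∈ S, X i)]
  · rw [ee_def, Finset.smul_sum]
    apply Finset.sum_congr rfl
    intro S hS
    rw [Finset.sum_const]
    rw [mem_powersetCard] at hS
    have hcard : (univ \ S).card = n - s := by
      rw [Finset.card_sdiff_of_subset hS.1, Finset.card_univ, Fintype.card_fin, hS.2]
    rw [hcard, Nat.cast_smul_eq_nsmul]
  · intro y S
    constructor
    · rintro ⟨-, hS⟩
      rw [mem_powersetCard, Finset.subset_erase] at hS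
      exact ⟨Finset.mem_sdiff.2 ⟨mem_univ y, hS.1.2⟩,
        mem_powersetCard.2 ⟨Finset.subset_univ _, hS.2⟩⟩
    · rintro ⟨hy, hS⟩
      rw [Finset.mem_sdiff] at hy
      rw [mem_powersetCard] at hS
      exact ⟨mem_univ y, mem_powersetCard.2 ⟨Finset.subset_erase.2 ⟨Finset.subset_univ _, hy.2⟩, hS.2⟩⟩

/-- E0 -/
lemma sum_X_mul_eAv {n : ℕ} (r : ℕ) :
    ∑ y : Fin n, X y * eAv y r = ((r + 1 : ℕ) : ℚ) • ee n (r+1) := by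
  unfold eAv
  have lhs_eq : ∑ y : Fin n, X y * (∑ S ∈ powersetCard r (univ.erase y), ∏ i ∈ S, X i)
      = ∑ y : Fin n, ∑ S ∈ powersetCard r (univ.erase y), ∏ i ∈ insert y S, (X i : MvPolynomial (Fin n) ℚ) := by
    apply Finset.sum_congr rfl; intro y _
    rw [Finset.mul_sum]
    apply Finset.sum_congr rfl; intro S hS
    rw [mem_powersetCard] at hS
    have hyS : y ∉ S := fun hmem => (notMem_erase y univ) (hS.1 hmem)
    rw [Finset.prod_insert hyS]
  rw [lhs_eq]
  rw [← Finset.sum_sigma univ (fun y => powersetCard r (univ.erase y))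
    (fun x => ∏ i ∈ insert x.1 x.2, X i)]
  rw [show ((r + 1 : ℕ) : ℚ) • ee n (r+1) = ∑ T ∈ powersetCard (r+1) univ, ∑ y ∈ T, ∏ i ∈ T, (X i : MvPolynomial (Fin n) ℚ) by
    rw [ee_def, Finset.smul_sum]
    apply Finset.sum_congr rfl
    intro T hT
    rw [mem_powersetCard] at hT
    rw [Finset.sum_const, hT.2, Nat.cast_smul_eq_nsmul]]
  rw [← Finset.sum_sigma (powersetCard (r+1) univ) (fun T => T)
    (fun x => ∏ i ∈ x.1, X i)]
  apply Finset.sum_nbij' (i := fun x => (⟨insert x.1 x.2, x.1⟩ : Σ _T : Finset (Fin n), Fin n))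
    (j := fun x => (⟨x.2, x.1.erase x.2⟩ : Σ _y : Fin n, Finset (Fin n)))
  · rintro ⟨y, S⟩ ha
    rw [Finset.mem_sigma, mem_powersetCard] at ha ⊢
    have hyS : y ∉ S := fun hmem => (notMem_erase y univ) (ha.2.1 hmem)
    exact ⟨⟨Finset.subset_univ _, by rw [Finset.card_insert_of_notMem hyS, ha.2.2]⟩,
      mem_insert_self _ _⟩
  · rintro ⟨T, y⟩ ha
    rw [Finset.mem_sigma, mem_powersetCard] at ha ⊢
    refine ⟨mem_univ _, ?_, ?_⟩
    · intro x hx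
      exact Finset.mem_erase.2 ⟨(Finset.mem_erase.1 hx).1, mem_univ x⟩
    · rw [Finset.card_erase_of_mem ha.2, ha.1.2]
      omega
  · rintro ⟨y, S⟩ ha
    rw [Finset.mem_sigma, mem_powersetCard] at ha
    have hyS : y ∉ S := fun hmem => (notMem_erase y univ) (ha.2.1 hmem)
    simp [Finset.erase_insert hyS]
  · rintro ⟨T, y⟩ ha
    rw [Finset.mem_sigma] at ha
    simp [Finset.insert_erase ha.2]
  · rintro ⟨y, S⟩ _
    rfl

/-- the glued-cliques core polynomial -/
def Gcore (n : ℕ) (r s : ℕ) : MvPolynomial (Fin n) ℚ :=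
  ∑ y : Fin n, X y * eAv y r * eAv y s

lemma Gcore_symm (n r s : ℕ) : Gcore n r s = Gcore n s r := by
  unfold Gcore; apply Finset.sum_congr rfl; intro y _; ring

lemma Gcore_zero (n r : ℕ) : Gcore n r 0 = ((r + 1 : ℕ) : ℚ) • ee n (r+1) := by
  unfold Gcore
  rw [← sum_X_mul_eAv]
  apply Finset.sum_congr rfl; intro y _
  rw [eAv_zero, mul_one]

/-- the recursion -/
lemma Gcore_rec (n r s : ℕ) (hs : 1 ≤ s) (hsr : s ≤ r + 1) :
    Gcore n r s = ((r + 1 - s : ℕ) : ℚ) • (ee n (r+1) * ee n s) + Gcore n (r+1) (s-1) := by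
  by_cases hn : n < r + 1
  · have h1 : ee n (r+1) = 0 := ee_of_big hn
    have hG : Gcore n r s = 0 := by
      unfold Gcore
      apply Finset.sum_eq_zero; intro y _
      rw [eAv_of_big y r (by omega), mul_zero, zero_mul]
    have hG2 : Gcore n (r+1) (s-1) = 0 := by
      unfold Gcore
      apply Finset.sum_eq_zero; intro y _
      rw [eAv_of_big y (r+1) (by omega), mul_zero, zero_mul]
    rw [hG, hG2, h1]; simp
  -- main case r + 1 ≤ n
  push_neg at hn
  obtain ⟨s', rfl⟩ : ∃ s', s = s' + 1 := ⟨s - 1, by omega⟩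
  have key1 : ∀ y : Fin n, X y * eAv y r = ee n (r+1) - eAv y (r+1) := by
    intro y
    rw [esymm_split y r]; ring
  have key2 : ∀ y : Fin n, X y * eAv y s' = ee n (s'+1) - eAv y (s'+1) := by
    intro y
    rw [esymm_split y s']; ring
  have expand : Gcore n r (s'+1)
      = (∑ y : Fin n, ee n (r+1) * eAv y (s'+1)) - (∑ y : Fin n, eAv y (r+1) * eAv y (s'+1)) := by
    unfold Gcore
    rw [← Finset.sum_sub_distrib]
    apply Finset.sum_congr rfl; intro y _
    rw [key1 y]; ring
  have expand2 : (∑ y : Fin n, eAv y (r+1) * eAv y (s'+1))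
      = (∑ y : Fin n, eAv y (r+1) * ee n (s'+1)) - Gcore n (r+1) s' := by
    unfold Gcore
    rw [← Finset.sum_sub_distrib]
    apply Finset.sum_congr rfl; intro y _
    have : eAv y (s'+1) = ee n (s'+1) - X y * eAv y s' := by rw [esymm_split y s']; ring
    rw [this]; ring
  rw [expand, expand2]
  have e1 : (∑ y : Fin n, ee n (r+1) * eAv y (s'+1)) = ((n - (s'+1) : ℕ) : ℚ) • (ee n (r+1) * ee n (s'+1)) := by
    rw [← Finset.mul_sum, sum_eAv, mul_smul_comm]
  have e2 : (∑ y : Fin n, eAv y (r+1) * ee n (s'+1)) = ((n - (r+1) : ℕ) : ℚ) • (ee n (r+1) * ee n (s'+1)) := by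
    rw [← Finset.sum_mul, sum_eAv, smul_mul_assoc]
  rw [e1, e2]
  have harith : ((n - (s'+1) : ℕ) : ℚ) - ((n - (r+1) : ℕ) : ℚ) = ((r + 1 - (s'+1) : ℕ) : ℚ) := by
    have h1 : s' + 1 ≤ n := le_trans hsr hn
    rw [Nat.cast_sub h1, Nat.cast_sub hn, Nat.cast_sub hsr]
    push_cast
    ring
  rw [← harith, sub_smul]
  abel



/-- a family of symmetric polynomials, one for each number of variables,
which is a fixed nonnegative combination of elementary symmetric products -/
def EPosFam (d : ℕ) (P : ∀ n : ℕ, MvPolynomial (Fin n) ℚ) : Prop :=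
  ∃ c : Nat.Partition d → ℚ, (∀ p, 0 ≤ c p) ∧
    ∀ n, P n = ∑ p : Nat.Partition d, c p • ((p.parts.map (esymm (Fin n) ℚ)).prod)

lemma EPosFam.zero (d : ℕ) : EPosFam d (fun _ => 0) := by
  exact ⟨fun _ => 0, fun _ => le_refl _, fun n => by simp⟩

lemma EPosFam.add {d : ℕ} {P Q : ∀ n : ℕ, MvPolynomial (Fin n) ℚ}
    (hP : EPosFam d P) (hQ : EPosFam d Q) : EPosFam d (fun n => P n + Q n) := by
  obtain ⟨c1, hc1, he1⟩ := hP
  obtain ⟨c2, hc2, he2⟩ := hQ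
  refine ⟨fun p => c1 p + c2 p, fun p => add_nonneg (hc1 p) (hc2 p), fun n => ?_⟩
  dsimp only
  rw [he1 n, he2 n, ← Finset.sum_add_distrib]
  apply Finset.sum_congr rfl
  intro p _
  rw [add_smul]

lemma EPosFam.smul {d : ℕ} {P : ∀ n : ℕ, MvPolynomial (Fin n) ℚ} {a : ℚ}
    (ha : 0 ≤ a) (hP : EPosFam d P) : EPosFam d (fun n => a • P n) := by
  obtain ⟨c1, hc1, he1⟩ := hP
  refine ⟨fun p => a * c1 p, fun p => mul_nonneg ha (hc1 p), fun n => ?_⟩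
  dsimp only
  rw [he1 n, Finset.smul_sum]
  apply Finset.sum_congr rfl
  intro p _
  rw [smul_smul]

lemma EPosFam.congr {d : ℕ} {P Q : ∀ n : ℕ, MvPolynomial (Fin n) ℚ}
    (hP : EPosFam d P) (h : ∀ n, P n = Q n) : EPosFam d Q := by
  obtain ⟨c1, hc1, he1⟩ := hP
  exact ⟨c1, hc1, fun n => (h n) ▸ he1 n⟩

/-- the single-part partition -/
def onePart (m : ℕ) (hm : 0 < m) : Nat.Partition m :=
  ⟨{m}, by intro i hi; rw [Multiset.mem_singleton] at hi; omega, by simp⟩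

lemma EPosFam.ee_base (m : ℕ) (hm : 0 < m) : EPosFam m (fun n => ee n m) := by
  refine ⟨fun p => if p = onePart m hm then 1 else 0,
    fun p => by dsimp only; split <;> norm_num, fun n => ?_⟩
  dsimp only
  simp only [ite_smul, one_smul, zero_smul, Finset.sum_ite_eq', Finset.mem_univ, if_true]
  simp [onePart, ee]

def pMerge {d1 d2 : ℕ} (p1 : Nat.Partition d1) (p2 : Nat.Partition d2) :
    Nat.Partition (d1 + d2) :=
  ⟨p1.parts + p2.parts, by
    intro i hi
    rw [Multiset.mem_add] at hi
    rcases hi with h | h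
    exacts [p1.parts_pos h, p2.parts_pos h], by
    rw [Multiset.sum_add, p1.parts_sum, p2.parts_sum]⟩

lemma EPosFam.mul {d1 d2 : ℕ} {P Q : ∀ n : ℕ, MvPolynomial (Fin n) ℚ}
    (hP : EPosFam d1 P) (hQ : EPosFam d2 Q) : EPosFam (d1 + d2) (fun n => P n * Q n) := by
  obtain ⟨c1, hc1, he1⟩ := hP
  obtain ⟨c2, hc2, he2⟩ := hQ
  set merge : Nat.Partition d1 × Nat.Partition d2 → Nat.Partition (d1 + d2) :=
    fun pq => pMerge pq.1 pq.2 with hmerge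
  refine ⟨fun p => ∑ pq ∈ Finset.univ.filter (fun pq => merge pq = p), c1 pq.1 * c2 pq.2,
    fun p => Finset.sum_nonneg (fun pq _ => mul_nonneg (hc1 pq.1) (hc2 pq.2)), fun n => ?_⟩
  dsimp only
  rw [he1 n, he2 n, Finset.sum_mul_sum]
  have rhs : ∀ p : Nat.Partition (d1+d2),
      (∑ pq ∈ Finset.univ.filter (fun pq => merge pq = p), c1 pq.1 * c2 pq.2) •
        ((p.parts.map (esymm (Fin n) ℚ)).prod)
      = ∑ pq ∈ Finset.univ.filter (fun pq => merge pq = p),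
          (c1 pq.1 * c2 pq.2) • (((merge pq).parts.map (esymm (Fin n) ℚ)).prod) := by
    intro p
    rw [Finset.sum_smul]
    apply Finset.sum_congr rfl
    intro pq hpq
    rw [Finset.mem_filter] at hpq
    rw [hpq.2]
  rw [Finset.sum_congr rfl (fun p _ => rhs p)]
  rw [Finset.sum_fiberwise_of_maps_to (fun pq _ => Finset.mem_univ (merge pq))
    (fun pq => (c1 pq.1 * c2 pq.2) • (((merge pq).parts.map (esymm (Fin n) ℚ)).prod))]
  rw [← Finset.sum_product']
  apply Finset.sum_congr rfl
  rintro ⟨p1, p2⟩ _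
  rw [smul_mul_smul_comm]
  congr 1
  show _ = (((pMerge p1 p2).parts).map (esymm (Fin n) ℚ)).prod
  show _ = (((p1.parts + p2.parts)).map (esymm (Fin n) ℚ)).prod
  rw [Multiset.map_add, Multiset.prod_add]

lemma Nat.Partition.zero_unique (p : Nat.Partition 0) : p.parts = 0 := by
  rw [Multiset.eq_zero_iff_forall_notMem]
  intro a ha
  have h1 := p.parts_pos ha
  have h2 := p.parts_sum
  have := Multiset.single_le_sum (fun x hx => Nat.zero_le x) a ha
  omega

lemma EPosFam.one : EPosFam 0 (fun n => 1) := by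
  refine ⟨fun _ => 1, fun _ => by norm_num, fun n => ?_⟩
  have : ∀ p : Nat.Partition 0, (1:ℚ) • ((p.parts.map (esymm (Fin n) ℚ)).prod) = 1 := by
    intro p
    rw [p.zero_unique]
    simp
  rw [Finset.sum_congr rfl (fun p _ => this p)]
  rw [Finset.sum_const]
  have : Fintype.card (Nat.Partition 0) = 1 := by
    rw [Fintype.card_eq_one_iff]
    refine ⟨⟨0, by simp, by simp⟩, fun p => ?_⟩
    have := p.zero_unique
    cases p
    simp_all
  rw [Finset.card_univ, this, one_smul]

/-- product over a multiset of families -/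
lemma EPosFam.msProd (M : Multiset ℕ) (F : ℕ → ∀ n : ℕ, MvPolynomial (Fin n) ℚ)
    (h : ∀ m ∈ M, EPosFam m (F m)) :
    EPosFam M.sum (fun n => (M.map (fun m => F m n)).prod) := by
  induction M using Multiset.induction_on with
  | empty => simpa using EPosFam.one
  | cons a M ih =>
    have h1 : EPosFam a (F a) := h a (Multiset.mem_cons_self a M)
    have h2 := ih (fun m hm => h m (Multiset.mem_cons_of_mem hm))
    have := EPosFam.mul h1 h2
    rw [Multiset.sum_cons]
    apply this.congr
    intro n
    rw [Multiset.map_cons, Multiset.prod_cons]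



/-- counting injections with prescribed image -/
lemma card_inj_image {ι : Type} [Fintype ι] [DecidableEq ι] {n : ℕ}
    (T : Finset (Fin n)) (S : Finset (Fin n)) (hST : S ⊆ T)
    (hcard : S.card = Fintype.card ι) :
    (Finset.univ.filter (fun u : ι → Fin n =>
      (Function.Injective u ∧ ∀ t, u t ∈ T) ∧ Finset.image u Finset.univ = S)).card
      = (Fintype.card ι).factorial := by
  have hS : Fintype.card {x // x ∈ S} = Fintype.card ι := by
    rw [Fintype.card_coe, hcard]
  rw [show (Fintype.card ι).factorial = (Finset.univ : Finset (ι ≃ {x // x ∈ S})).card by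
    rw [Finset.card_univ, Fintype.card_equiv (Fintype.equivOfCardEq hS.symm)]]
  refine Finset.card_bij'
    (fun u hu => Equiv.ofBijective
      (fun t => (⟨u t, by
        rw [← (Finset.mem_filter.1 hu).2.2]
        exact Finset.mem_image_of_mem u (Finset.mem_univ t)⟩ : {x // x ∈ S}))
      ((Fintype.bijective_iff_injective_and_card _).2
        ⟨fun t1 t2 h12 => (Finset.mem_filter.1 hu).2.1.1 (Subtype.ext_iff.1 h12), hS.symm⟩))
    (fun e _ => fun t => (e t).val) (fun u hu => Finset.mem_univ _) ?_ ?_ ?_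
  · intro e _
    rw [Finset.mem_filter]
    have himg : Finset.image (fun t => (e t).val) Finset.univ = S := by
      apply Finset.ext
      intro x
      rw [Finset.mem_image]
      constructor
      · rintro ⟨t, -, rfl⟩; exact (e t).2
      · intro hx
        exact ⟨e.symm ⟨x, hx⟩, Finset.mem_univ _, by simp⟩
    refine ⟨Finset.mem_univ _, ⟨⟨?_, fun t => hST (e t).2⟩, himg⟩⟩
    intro t1 t2 h12
    exact e.injective (Subtype.ext h12)
  · intro u hu; rfl
  · intro e _
    apply Equiv.ext
    intro t
    apply Subtype.ext
    rfl

/-- J1': sum over injections into T -/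
lemma sum_inj_range {ι : Type} [Fintype ι] [DecidableEq ι] {n : ℕ} (T : Finset (Fin n)) :
    ∑ u ∈ Finset.univ.filter (fun u : ι → Fin n => Function.Injective u ∧ ∀ t, u t ∈ T),
      ∏ t : ι, (X (u t) : MvPolynomial (Fin n) ℚ)
      = (((Fintype.card ι).factorial : ℕ) : ℚ) •
        ∑ S ∈ powersetCard (Fintype.card ι) T, ∏ i ∈ S, X i := by
  set c := Fintype.card ι
  rw [← Finset.sum_fiberwise_of_maps_to (g := fun u : ι → Fin n => Finset.image u Finset.univ)
    (t := powersetCard c T) ?_ (fun u => ∏ t : ι, (X (u t) : MvPolynomial (Fin n) ℚ))]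
  · rw [Finset.smul_sum]
    apply Finset.sum_congr rfl
    intro S hS
    rw [mem_powersetCard] at hS
    have inner : ∀ u ∈ (Finset.univ.filter (fun u : ι → Fin n => Function.Injective u ∧ ∀ t, u t ∈ T)).filter
        (fun u => Finset.image u Finset.univ = S), (∏ t : ι, (X (u t) : MvPolynomial (Fin n) ℚ)) = ∏ i ∈ S, X i := by
      intro u hu
      rw [Finset.mem_filter, Finset.mem_filter] at hu
      rw [← hu.2, Finset.prod_image (fun x _ y _ h => hu.1.2.1 h)]
    rw [Finset.sum_congr rfl inner, Finset.sum_const]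
    rw [Finset.filter_filter]
    rw [card_inj_image T S hS.1 hS.2, Nat.cast_smul_eq_nsmul]
  · intro u hu
    rw [Finset.mem_filter] at hu
    rw [mem_powersetCard]
    constructor
    · intro x hx
      obtain ⟨t, -, rfl⟩ := Finset.mem_image.1 hx
      exact hu.2.2 t
    · rw [Finset.card_image_of_injective _ hu.2.1, Finset.card_univ]

/-- J2: anchored injection sum -/
lemma sum_inj_anchor {ι : Type} [Fintype ι] [DecidableEq ι] {n : ℕ} (a : ι) (y : Fin n) :
    ∑ u ∈ Finset.univ.filter (fun u : ι → Fin n => Function.Injective u ∧ u a = y),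
      ∏ t ∈ Finset.univ.erase a, (X (u t) : MvPolynomial (Fin n) ℚ)
      = (((Fintype.card ι - 1).factorial : ℕ) : ℚ) • eAv y (Fintype.card ι - 1) := by
  have hcard : Fintype.card {t : ι // t ≠ a} = Fintype.card ι - 1 := by
    rw [Fintype.card_subtype_compl, Fintype.card_subtype_eq]
  have key := sum_inj_range (ι := {t : ι // t ≠ a}) (n := n) (Finset.univ.erase y)
  rw [hcard] at key
  rw [show eAv y (Fintype.card ι - 1) = ∑ S ∈ powersetCard (Fintype.card ι - 1) (univ.erase y), ∏ i ∈ S, X i from rfl]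
  rw [← key]
  apply Finset.sum_nbij' (i := fun u => fun t : {t : ι // t ≠ a} => u t.val)
    (j := fun v => fun t : ι => if h : t = a then y else v ⟨t, h⟩)
  · intro u hu
    rw [Finset.mem_filter] at hu ⊢
    refine ⟨Finset.mem_univ _, fun t1 t2 h12 => Subtype.ext (hu.2.1 h12), fun t => ?_⟩
    rw [Finset.mem_erase]
    constructor
    · intro hcontra
      dsimp only at hcontra
      exact t.2 (hu.2.1 (hcontra.trans hu.2.2.symm))
    · exact Finset.mem_univ _
  · intro v hv
    rw [Finset.mem_filter] at hv ⊢
    refine ⟨Finset.mem_univ _, ?_, by simp⟩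
    intro t1 t2 h12
    by_cases h1 : t1 = a <;> by_cases h2 : t2 = a
    · rw [h1, h2]
    · exfalso
      simp only [h1, dif_pos, dif_neg h2] at h12
      exact (Finset.mem_erase.1 (hv.2.2 ⟨t2, h2⟩)).1 h12.symm
    · exfalso
      simp only [h2, dif_pos, dif_neg h1] at h12
      exact (Finset.mem_erase.1 (hv.2.2 ⟨t1, h1⟩)).1 h12
    · simp only [dif_neg h1, dif_neg h2] at h12
      exact Subtype.ext_iff.1 (hv.2.1 h12)
  · intro u hu
    rw [Finset.mem_filter] at hu
    funext t
    by_cases h : t = a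
    · rw [dif_pos h, h, hu.2.2]
    · rw [dif_neg h]
  · intro v hv
    funext t
    show (if h : (t : ι) = a then y else v ⟨t, h⟩) = v t
    rw [dif_neg t.2]
  · intro u hu
    rw [Finset.mem_filter] at hu
    rw [Finset.prod_subtype (p := fun x => x ≠ a) (Finset.univ.erase a)
      (fun x => ⟨fun h => (Finset.mem_erase.1 h).1, fun h => Finset.mem_erase.2 ⟨h, Finset.mem_univ x⟩⟩)
      (fun t => (X (u t) : MvPolynomial (Fin n) ℚ))]

open Finset MvPolynomial

-- ===== basic conversions =====

/-- convert an `n`-colouring word to a word in positive integers -/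
def toW {m n : ℕ} (v : Fin m → Fin n) : NCWord m := fun t => ⟨v t + 1, Nat.succ_pos _⟩

lemma toW_ne {m n : ℕ} (v : Fin m → Fin n) (j k : Fin m) :
    toW v j ≠ toW v k ↔ v j ≠ v k := by
  unfold toW
  constructor
  · intro h hc
    exact h (congrArg (fun x : Fin n => (⟨(x : ℕ) + 1, Nat.succ_pos _⟩ : ℕ+)) hc)
  · intro h hc
    apply h
    have h2 : (v j : ℕ) + 1 = (v k : ℕ) + 1 := congrArg Subtype.val hc
    exact Fin.ext (Nat.succ_injective h2)

-- ===== blockOf lemmas =====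

lemma blockOf_eq_part {d : ℕ} (π : SetPtn d) (a : Fin d) : blockOf π a = π.part a := by
  apply Finset.ext; intro k
  rw [blockOf, Finset.mem_filter]
  constructor
  · rintro ⟨-, B, hB, haB, hkB⟩
    have : π.part a = B := Finpartition.part_eq_of_mem π hB haB
    rw [this]; exact hkB
  · intro hk
    exact ⟨Finset.mem_univ _, π.part a, π.part_mem.2 (Finset.mem_univ a),
      π.mem_part_self.2 (Finset.mem_univ a), hk⟩

lemma blockOf_mem {d : ℕ} (π : SetPtn d) (a : Fin d) : blockOf π a ∈ π.parts := by
  rw [blockOf_eq_part]; exact π.part_mem.2 (Finset.mem_univ a)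

lemma mem_blockOf {d : ℕ} (π : SetPtn d) (a : Fin d) : a ∈ blockOf π a := by
  rw [blockOf_eq_part]; exact π.mem_part_self.2 (Finset.mem_univ a)

lemma blockOf_unique {d : ℕ} (π : SetPtn d) (a : Fin d) {D : Finset (Fin d)}
    (hD : D ∈ π.parts) (haD : a ∈ D) : D = blockOf π a :=
  Finpartition.eq_of_mem_parts π hD (blockOf_mem π a) haD (mem_blockOf π a)

-- ===== eSP as product of indicators =====

lemma eSP_cond_iff {d n : ℕ} (π : SetPtn d) (w : Fin d → Fin n) :
    (∀ j k : Fin d, j ≠ k → sameBlock π j k → toW w j ≠ toW w k)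
      ↔ ∀ D ∈ π.parts, Set.InjOn w ↑D := by
  constructor
  · intro h B hB x hx x' hx' hxx'
    by_contra hne
    exact ((toW_ne w x x').1 (h x x' hne ⟨B, hB, Finset.mem_coe.1 hx, Finset.mem_coe.1 hx'⟩)) hxx'
  · rintro h j k hjk ⟨B, hB, hj, hk⟩
    rw [toW_ne]
    intro hwc
    exact hjk (h B hB (Finset.mem_coe.2 hj) (Finset.mem_coe.2 hk) hwc)

lemma eSP_toW {d n : ℕ} (π : SetPtn d) (w : Fin d → Fin n) :
    eSP π (toW w) = ∏ D ∈ π.parts, (if Set.InjOn w ↑D then (1:ℚ) else 0) := by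
  by_cases hC : ∀ D ∈ π.parts, Set.InjOn w ↑D
  · rw [Finset.prod_congr rfl (fun D hD => if_pos (hC D hD)), Finset.prod_const_one, eSP,
      if_pos ((eSP_cond_iff π w).2 hC)]
  · push_neg at hC
    obtain ⟨D₀, hD₀, hnot⟩ := hC
    have h0 : (if Set.InjOn w ↑D₀ then (1:ℚ) else 0) = 0 := if_neg hnot
    rw [eSP, if_neg (fun hcond => hnot ((eSP_cond_iff π w).1 hcond D₀ hD₀)),
      Finset.prod_eq_zero hD₀ h0]

-- helper: product of rational smuls
lemma prod_qsmul {ι : Type} {n : ℕ} (s : Finset ι) (f : ι → ℚ) (g : ι → MvPolynomial (Fin n) ℚ) :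
    ∏ i ∈ s, (f i • g i) = (∏ i ∈ s, f i) • ∏ i ∈ s, g i := by
  classical
  induction s using Finset.induction_on with
  | empty => simp
  | @insert a s ha ih =>
    rw [Finset.prod_insert ha, Finset.prod_insert ha, Finset.prod_insert ha, ih,
      smul_mul_smul_comm]

-- indicator product
lemma ind_mul_ind (P Q : Prop) [Decidable P] [Decidable Q] :
    (if P then (1:ℚ) else 0) * (if Q then 1 else 0) = if P ∧ Q then 1 else 0 := by
  by_cases hP : P <;> by_cases hQ : Q <;> simp [hP, hQ]

-- product over the parts of a partition
lemma prod_parts {d : ℕ} (π : SetPtn d) {M : Type*} [CommMonoid M] (g : Fin d → M) :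
    ∏ D ∈ π.parts, ∏ t ∈ D, g t = ∏ t : Fin d, g t := by
  conv_rhs => rw [show (Finset.univ : Finset (Fin d)) = π.parts.biUnion id from (Finpartition.biUnion_parts π).symm]
  rw [Finset.prod_biUnion (π.supIndep.pairwiseDisjoint)]
  rfl


-- ===== block factor values =====

def IVal (n m : ℕ) : MvPolynomial (Fin n) ℚ := ((m.factorial : ℕ) : ℚ) • ee n m

def AVal {n : ℕ} (y : Fin n) (m : ℕ) : MvPolynomial (Fin n) ℚ :=
  (((m - 1).factorial : ℕ) : ℚ) • eAv y (m - 1)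

lemma injOn_iff_subtype {α β : Type*} (s : Finset α) (w : α → β) :
    Function.Injective (fun t : {x // x ∈ s} => w t.1) ↔ Set.InjOn w ↑s := by
  constructor
  · intro h x hx x' hx' e
    exact Subtype.ext_iff.1 (h (a₁ := ⟨x, Finset.mem_coe.1 hx⟩) (a₂ := ⟨x', Finset.mem_coe.1 hx'⟩) e)
  · intro h t t' e
    exact Subtype.ext (h (Finset.mem_coe.2 t.2) (Finset.mem_coe.2 t'.2) e)

lemma sum_ind_smul {ι : Type} [Fintype ι] {M : Type*} [AddCommMonoid M] [Module ℚ M]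
    (P : ι → Prop) [DecidablePred P] (F : ι → M) :
    ∑ i : ι, (if P i then (1:ℚ) else 0) • F i = ∑ i ∈ Finset.univ.filter P, F i := by
  classical
  rw [Finset.sum_filter]
  apply Finset.sum_congr rfl
  intro i _
  split_ifs <;> simp

/-- The factor attached to one block. -/
def blkF {p n : ℕ} (π : SetPtn p) (a : Fin p) (y : Fin n)
    (D : {S // S ∈ π.parts}) (u : {x // x ∈ D.1} → Fin n) : MvPolynomial (Fin n) ℚ :=
  ((if Function.Injective u then (1:ℚ) else 0) *
    (if h : a ∈ D.1 then (if u ⟨a, h⟩ = y then (1:ℚ) else 0) else 1)) •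
  ∏ t : {x // x ∈ D.1}, (if (t : Fin p) = a then 1 else X (u t))

/-- reassembling a word from its restrictions to blocks -/
def partsEquiv {p : ℕ} (π : SetPtn p) (n : ℕ) :
    (Fin p → Fin n) ≃ (∀ D : {S // S ∈ π.parts}, ({x // x ∈ D.1} → Fin n)) where
  toFun := fun w D t => w t.1
  invFun := fun g t => g ⟨π.part t, π.part_mem.2 (Finset.mem_univ t)⟩
    ⟨t, π.mem_part_self.2 (Finset.mem_univ t)⟩
  left_inv := fun w => rfl
  right_inv := fun g => by
    funext D t
    have key : ∀ (Ep : {S // S ∈ π.parts}) (hE : (t : Fin p) ∈ Ep.1), Ep = D →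
        g Ep ⟨t.1, hE⟩ = g D t := by
      rintro Ep hE rfl
      exact congrArg (g Ep) (Subtype.ext rfl)
    exact key _ _ (Subtype.ext (Finpartition.part_eq_of_mem π D.2 t.2))

set_option maxHeartbeats 1000000 in
lemma blkF_point {p n : ℕ} (π : SetPtn p) (a : Fin p) (y : Fin n) (w : Fin p → Fin n) :
    ∏ D : {S // S ∈ π.parts}, blkF π a y D (fun t => w t.1)
    = (eSP π (toW w) * (if w a = y then 1 else 0)) •
        ∏ t : Fin p, (if t = a then (1 : MvPolynomial (Fin n) ℚ) else X (w t)) := by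
  classical
  have comp1 : ∏ D : {S // S ∈ π.parts},
      (if Function.Injective (fun t : {x // x ∈ D.1} => w t.1) then (1:ℚ) else 0)
      = eSP π (toW w) := by
    rw [eSP_toW π w, ← Finset.prod_coe_sort π.parts (fun S => if Set.InjOn w ↑S then (1:ℚ) else 0)]
    apply Finset.prod_congr rfl
    intro D _
    exact if_congr (injOn_iff_subtype D.1 w) rfl rfl
  have comp2 : ∏ D : {S // S ∈ π.parts},
      (if h : a ∈ D.1 then (if w a = y then (1:ℚ) else 0) else 1)
      = (if w a = y then (1:ℚ) else 0) := by
    rw [Fintype.prod_eq_single (⟨blockOf π a, blockOf_mem π a⟩ : {S // S ∈ π.parts})]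
    · rw [dif_pos (mem_blockOf π a)]
    · intro D hD
      have haD : a ∉ D.1 := fun haD => hD (Subtype.ext (blockOf_unique π a D.2 haD))
      rw [dif_neg haD]
  have comp3 : ∏ D : {S // S ∈ π.parts}, (∏ t : {x // x ∈ D.1},
        (if (t : Fin p) = a then (1 : MvPolynomial (Fin n) ℚ) else X (w t.1)))
      = ∏ t : Fin p, (if t = a then (1 : MvPolynomial (Fin n) ℚ) else X (w t)) := by
    calc ∏ D : {S // S ∈ π.parts}, (∏ t : {x // x ∈ D.1},
            (if (t : Fin p) = a then (1 : MvPolynomial (Fin n) ℚ) else X (w t.1)))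
        = ∏ D : {S // S ∈ π.parts}, ∏ t ∈ D.1,
            (if t = a then (1 : MvPolynomial (Fin n) ℚ) else X (w t)) := by
          apply Finset.prod_congr rfl
          intro D _
          exact Finset.prod_coe_sort D.1 (fun t => if t = a then 1 else X (w t))
      _ = ∏ D ∈ π.parts, ∏ t ∈ D,
            (if t = a then (1 : MvPolynomial (Fin n) ℚ) else X (w t)) :=
          Finset.prod_coe_sort π.parts
            (fun S => ∏ t ∈ S, (if t = a then (1 : MvPolynomial (Fin n) ℚ) else X (w t)))
      _ = ∏ t : Fin p, (if t = a then (1 : MvPolynomial (Fin n) ℚ) else X (w t)) :=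
          prod_parts π _
  simp only [blkF]
  rw [prod_qsmul, Finset.prod_mul_distrib, comp1, comp3, comp2]

set_option maxHeartbeats 1000000 in
lemma blkF_exchange {p n : ℕ} (π : SetPtn p) (a : Fin p) (y : Fin n) :
    ∑ w : Fin p → Fin n, ∏ D : {S // S ∈ π.parts}, blkF π a y D (fun t => w t.1)
    = ∏ D : {S // S ∈ π.parts}, ∑ u : {x // x ∈ D.1} → Fin n, blkF π a y D u := by
  classical
  rw [Finset.prod_univ_sum]
  rw [Fintype.piFinset_univ]
  exact Fintype.sum_equiv (partsEquiv π n) _ _ (fun w => rfl)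

set_option maxHeartbeats 1000000 in
lemma blkF_eval_mem {p n : ℕ} (π : SetPtn p) (a : Fin p) (y : Fin n)
    (D : {S // S ∈ π.parts}) (h : a ∈ D.1) :
    ∑ u : {x // x ∈ D.1} → Fin n, blkF π a y D u = AVal y D.1.card := by
  classical
  have hfu : ∀ u : {x // x ∈ D.1} → Fin n, blkF π a y D u =
      (if (Function.Injective u ∧ u ⟨a, h⟩ = y) then (1:ℚ) else 0) •
        ∏ t ∈ Finset.univ.erase (⟨a, h⟩ : {x // x ∈ D.1}), X (u t) := by
    intro u
    rw [blkF, dif_pos h, ind_mul_ind]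
    congr 1
    calc ∏ t : {x // x ∈ D.1}, (if (t : Fin p) = a then 1 else X (u t))
        = ∏ t : {x // x ∈ D.1}, (if t = (⟨a, h⟩ : {x // x ∈ D.1}) then 1 else X (u t)) := by
          apply Finset.prod_congr rfl
          intro t _
          exact if_congr ⟨fun e => Subtype.ext e, fun e => congrArg Subtype.val e⟩ rfl rfl
      _ = ∏ t ∈ Finset.univ.erase (⟨a, h⟩ : {x // x ∈ D.1}),
          (if t = (⟨a, h⟩ : {x // x ∈ D.1}) then 1 else X (u t)) :=
          (Finset.prod_erase (f := fun t : {x // x ∈ D.1} =>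
            if t = (⟨a, h⟩ : {x // x ∈ D.1}) then (1 : MvPolynomial (Fin n) ℚ) else X (u t))
            Finset.univ (if_pos rfl)).symm
      _ = ∏ t ∈ Finset.univ.erase (⟨a, h⟩ : {x // x ∈ D.1}), X (u t) :=
          Finset.prod_congr rfl (fun t ht => if_neg (Finset.mem_erase.1 ht).1)
  rw [Finset.sum_congr rfl (fun u _ => hfu u), sum_ind_smul, sum_inj_anchor, AVal,
    Fintype.card_coe]

set_option maxHeartbeats 1000000 in
lemma blkF_eval_notmem {p n : ℕ} (π : SetPtn p) (a : Fin p) (y : Fin n)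
    (D : {S // S ∈ π.parts}) (h : a ∉ D.1) :
    ∑ u : {x // x ∈ D.1} → Fin n, blkF π a y D u = IVal n D.1.card := by
  classical
  have hfu : ∀ u : {x // x ∈ D.1} → Fin n, blkF π a y D u =
      (if (Function.Injective u ∧ ∀ t, u t ∈ (Finset.univ : Finset (Fin n)))
        then (1:ℚ) else 0) • ∏ t : {x // x ∈ D.1}, X (u t) := by
    intro u
    rw [blkF, dif_neg h, mul_one]
    congr 1
    · exact if_congr ⟨fun hi => ⟨hi, fun t => Finset.mem_univ _⟩, fun hi => hi.1⟩ rfl rfl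
    · apply Finset.prod_congr rfl
      intro t _
      exact if_neg (fun e => h (by rw [← e]; exact t.2))
  rw [Finset.sum_congr rfl (fun u _ => hfu u), sum_ind_smul, sum_inj_range, IVal,
    Fintype.card_coe]
  rfl

set_option maxHeartbeats 1000000 in
/-- The master factorization lemma. -/
lemma master {p n : ℕ} (π : SetPtn p) (a : Fin p) (y : Fin n) :
    ∑ w : Fin p → Fin n, (eSP π (toW w) * (if w a = y then 1 else 0)) •
        ∏ t : Fin p, (if t = a then (1 : MvPolynomial (Fin n) ℚ) else X (w t))
    = AVal y (blockOf π a).card *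
      (((π.parts.erase (blockOf π a)).val.map Finset.card).map (IVal n)).prod := by
  classical
  rw [Finset.sum_congr rfl (fun w _ => (blkF_point π a y w).symm), blkF_exchange π a y]
  have heval : ∀ D : {S // S ∈ π.parts},
      (∑ u : {x // x ∈ D.1} → Fin n, blkF π a y D u)
      = if a ∈ D.1 then AVal y D.1.card else IVal n D.1.card := by
    intro D
    by_cases h : a ∈ D.1
    · rw [if_pos h, blkF_eval_mem π a y D h]
    · rw [if_neg h, blkF_eval_notmem π a y D h]
  rw [Finset.prod_congr rfl (fun D _ => heval D)]
  rw [Finset.prod_coe_sort π.parts (fun S => if a ∈ S then AVal y S.card else IVal n S.card)]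
  rw [← Finset.mul_prod_erase π.parts _ (blockOf_mem π a), if_pos (mem_blockOf π a)]
  congr 1
  calc ∏ S ∈ π.parts.erase (blockOf π a), (if a ∈ S then AVal y S.card else IVal n S.card)
      = ∏ S ∈ π.parts.erase (blockOf π a), IVal n S.card := by
        apply Finset.prod_congr rfl
        intro S hS
        exact if_neg (fun haS =>
          (Finset.mem_erase.1 hS).1 (blockOf_unique π a (Finset.mem_of_mem_erase hS) haS))
    _ = (((π.parts.erase (blockOf π a)).val.map Finset.card).map (IVal n)).prod := by
        rw [Multiset.map_map]
        rfl

-- ===== EPosFam for Gcore =====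

lemma EPosFam.cast {d d' : ℕ} (h : d = d') {P : ∀ n : ℕ, MvPolynomial (Fin n) ℚ}
    (hP : EPosFam d P) : EPosFam d' P := h ▸ hP

lemma GcoreFam_le : ∀ s r : ℕ, s ≤ r → EPosFam (r + s + 1) (fun n => Gcore n r s) := by
  intro s
  induction s with
  | zero =>
    intro r _
    exact ((EPosFam.ee_base (r+1) (Nat.succ_pos r)).smul
      (a := ((r + 1 : ℕ) : ℚ)) (Nat.cast_nonneg _)).congr (fun n => (Gcore_zero n r).symm)
  | succ s ih =>
    intro r hsr
    have hrec : ∀ n, Gcore n r (s+1)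
        = ((r + 1 - (s+1) : ℕ) : ℚ) • (ee n (r+1) * ee n (s+1)) + Gcore n (r+1) s := by
      intro n
      have h := Gcore_rec n r (s+1) (Nat.succ_pos s) (by omega)
      simpa using h
    have h1 : EPosFam ((r+1) + (s+1)) (fun n => ee n (r+1) * ee n (s+1)) :=
      (EPosFam.ee_base (r+1) (Nat.succ_pos r)).mul (EPosFam.ee_base (s+1) (Nat.succ_pos s))
    have h1' := (h1.smul (a := ((r + 1 - (s+1) : ℕ) : ℚ)) (Nat.cast_nonneg _)).cast
      (by omega : (r+1) + (s+1) = r + (s+1) + 1)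
    have h2 := (ih (r+1) (by omega)).cast (by omega : (r+1) + s + 1 = r + (s+1) + 1)
    exact (h1'.add h2).congr (fun n => (hrec n).symm)

lemma GcoreFam (r s : ℕ) : EPosFam (r + s + 1) (fun n => Gcore n r s) := by
  rcases le_or_gt s r with h | h
  · exact GcoreFam_le s r h
  · exact ((GcoreFam_le r s h.le).cast (by omega)).congr (fun n => Gcore_symm n s r)

lemma EPosFam.finsetSum {d : ℕ} {ι : Type*} (s : Finset ι) (c : ι → ℚ)
    (F : ι → ∀ n : ℕ, MvPolynomial (Fin n) ℚ)
    (hc : ∀ i ∈ s, 0 ≤ c i) (hF : ∀ i ∈ s, EPosFam d (F i)) :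
    EPosFam d (fun n => ∑ i ∈ s, c i • F i n) := by
  classical
  induction s using Finset.induction_on with
  | empty => exact (EPosFam.zero d).congr (fun n => by simp)
  | @insert a s ha ih =>
    have h1 := (hF a (Finset.mem_insert_self a s)).smul (hc a (Finset.mem_insert_self a s))
    have h2 := ih (fun i hi => hc i (Finset.mem_insert_of_mem hi))
      (fun i hi => hF i (Finset.mem_insert_of_mem hi))
    exact (h1.add h2).congr (fun n => by rw [Finset.sum_insert ha])

-- ===== the linear functionals =====

def lamCut (p n : ℕ) (a : Fin p) (y : Fin n) : Md p →ₗ[ℚ] MvPolynomial (Fin n) ℚ where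
  toFun f := ∑ w : Fin p → Fin n, (f (toW w) * (if w a = y then 1 else 0)) •
    ∏ t : Fin p, (if t = a then (1 : MvPolynomial (Fin n) ℚ) else X (w t))
  map_add' f g := by
    simp only [Pi.add_apply]
    rw [← Finset.sum_add_distrib]
    apply Finset.sum_congr rfl
    intro w _
    rw [add_mul, add_smul]
  map_smul' q f := by
    simp only [Pi.smul_apply, smul_eq_mul, RingHom.id_apply]
    rw [Finset.smul_sum]
    apply Finset.sum_congr rfl
    intro w _
    rw [mul_assoc, smul_smul]

def lamFull (p n : ℕ) (a : Fin p) (y : Fin n) : Md p →ₗ[ℚ] MvPolynomial (Fin n) ℚ where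
  toFun f := ∑ w : Fin p → Fin n, (f (toW w) * (if w a = y then 1 else 0)) •
    ∏ t : Fin p, X (w t)
  map_add' f g := by
    simp only [Pi.add_apply]
    rw [← Finset.sum_add_distrib]
    apply Finset.sum_congr rfl
    intro w _
    rw [add_mul, add_smul]
  map_smul' q f := by
    simp only [Pi.smul_apply, smul_eq_mul, RingHom.id_apply]
    rw [Finset.smul_sum]
    apply Finset.sum_congr rfl
    intro w _
    rw [mul_assoc, smul_smul]

lemma lamFull_eq {p n : ℕ} (a : Fin p) (y : Fin n) (f : Md p) :
    lamFull p n a y f = X y * lamCut p n a y f := by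
  show ∑ w : Fin p → Fin n, _ = X y * ∑ w : Fin p → Fin n, _
  rw [Finset.mul_sum]
  apply Finset.sum_congr rfl
  intro w _
  by_cases h : w a = y
  · rw [mul_smul_comm]
    congr 1
    have h1 : ∏ t : Fin p, (X (w t) : MvPolynomial (Fin n) ℚ)
        = X (w a) * ∏ t ∈ Finset.univ.erase a, X (w t) :=
      (Finset.mul_prod_erase Finset.univ _ (Finset.mem_univ a)).symm
    have h2 : ∏ t ∈ Finset.univ.erase a, (X (w t) : MvPolynomial (Fin n) ℚ)
        = ∏ t : Fin p, (if t = a then 1 else X (w t)) := by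
      rw [← Finset.prod_erase (f := fun t => if t = a then (1 : MvPolynomial (Fin n) ℚ) else X (w t))
        Finset.univ (if_pos rfl)]
      apply Finset.prod_congr rfl
      intro t ht
      rw [if_neg (Finset.mem_erase.1 ht).1]
    rw [h1, h2, h]
  · rw [if_neg h, mul_zero, zero_smul, zero_smul, mul_zero]

lemma lamCut_eSP {p n : ℕ} (π : SetPtn p) (a : Fin p) (y : Fin n) :
    lamCut p n a y (eSP π)
      = AVal y (ptype π a).2 * ((ptype π a).1.map (IVal n)).prod :=
  master π a y

lemma lamCut_ksub {p n : ℕ} (a : Fin p) (y : Fin n) {f : Md p} (hf : f ∈ Ksub a) :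
    lamCut p n a y f = 0 := by
  have hle : Ksub a ≤ LinearMap.ker (lamCut p n a y) := by
    rw [Ksub, Submodule.span_le]
    rintro g ⟨π₁, π₂, htype, rfl⟩
    rw [SetLike.mem_coe, LinearMap.mem_ker, map_sub, lamCut_eSP, lamCut_eSP, htype, sub_self]
  exact LinearMap.mem_ker.1 (hle hf)

lemma lamCut_YG {p n : ℕ} (a : Fin p) (y : Fin n) {Gr : SimpleGraph (Fin p)}
    {s : Finset (SetPtn p)} {c : SetPtn p → ℚ}
    (hK : YG Gr - ∑ π ∈ s, c π • eSP π ∈ Ksub a) :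
    lamCut p n a y (YG Gr) = ∑ π ∈ s, c π • lamCut p n a y (eSP π) := by
  have h0 := lamCut_ksub a y hK
  rw [map_sub, sub_eq_zero] at h0
  rw [h0, map_sum]
  apply Finset.sum_congr rfl
  intro π _
  rw [map_smul]

-- ===== splitting the concatenated sum =====

def emA {p q : ℕ} (hq : 0 < q) (i : Fin p) : Fin (p + q - 1) :=
  ⟨i, by have := i.isLt; omega⟩

def emB {p q : ℕ} (hp : 0 < p) (j : Fin q) : Fin (p + q - 1) :=
  ⟨(j : ℕ) + (p - 1), by have := j.isLt; omega⟩

def rv {q : ℕ} (j : Fin q) : Fin q := ⟨q - 1 - (j : ℕ), by have := j.isLt; omega⟩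

lemma rv_rv {q : ℕ} (j : Fin q) : rv (rv j) = j := by
  apply Fin.ext
  have := j.isLt
  simp only [rv]
  omega

lemma monomial_split {p q n : ℕ} (hp : 0 < p) (hq : 0 < q) (w : Fin (p+q-1) → Fin n) :
    ∏ t : Fin (p+q-1), (X (w t) : MvPolynomial (Fin n) ℚ)
    = (∏ t : Fin p, X (w (emA hq t))) *
      ∏ t : Fin q, (if t = (⟨q-1, by omega⟩ : Fin q) then 1 else X (w (emB hp (rv t)))) := by
  classical
  rw [← Finset.prod_filter_mul_prod_filter_not (Finset.univ : Finset (Fin (p+q-1)))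
    (fun t => (t : ℕ) < p) (fun t => (X (w t) : MvPolynomial (Fin n) ℚ))]
  congr 1
  · refine Finset.prod_bij' ?_ ?_ ?_ ?_ ?_ ?_ ?_
    · intro t ht
      exact ⟨(t : ℕ), (Finset.mem_filter.1 ht).2⟩
    · intro u _
      exact emA hq u
    · intro t ht; exact Finset.mem_univ _
    · intro u _
      rw [Finset.mem_filter]
      exact ⟨Finset.mem_univ _, u.isLt⟩
    · intro t ht; apply Fin.ext; rfl
    · intro u _; apply Fin.ext; rfl
    · intro t ht
      have he : emA (p := p) hq ⟨(t : ℕ), (Finset.mem_filter.1 ht).2⟩ = t := Fin.ext rfl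
      rw [he]
  · rw [show ∏ t : Fin q, (if t = (⟨q-1, by omega⟩ : Fin q) then 1
        else (X (w (emB hp (rv t))) : MvPolynomial (Fin n) ℚ))
      = ∏ t ∈ Finset.univ.erase (⟨q-1, by omega⟩ : Fin q), X (w (emB hp (rv t))) by
        rw [← Finset.prod_erase (f := fun t : Fin q => if t = (⟨q-1, by omega⟩ : Fin q) then 1
          else (X (w (emB hp (rv t))) : MvPolynomial (Fin n) ℚ)) Finset.univ (if_pos rfl)]
        apply Finset.prod_congr rfl
        intro t ht
        rw [if_neg (Finset.mem_erase.1 ht).1]]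
    refine Finset.prod_bij' ?_ ?_ ?_ ?_ ?_ ?_ ?_
    · intro t ht
      exact rv (⟨(t : ℕ) - (p - 1), by have := t.isLt; omega⟩ : Fin q)
    · intro u _
      exact emB hp (rv u)
    · intro t ht
      have h1 : ¬ ((t : ℕ) < p) := (Finset.mem_filter.1 ht).2
      have h2 := t.isLt
      rw [Finset.mem_erase]
      constructor
      · intro hcontra
        have h3 := congrArg Fin.val hcontra
        simp only [rv] at h3
        omega
      · exact Finset.mem_univ _
    · intro u hu
      have hune : (u : ℕ) ≠ q - 1 := fun hv => (Finset.mem_erase.1 hu).1 (Fin.ext hv)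
      have h2 := u.isLt
      rw [Finset.mem_filter]
      refine ⟨Finset.mem_univ _, ?_⟩
      show ¬ ((emB hp (rv u) : ℕ) < p)
      simp only [emB, rv]
      omega
    · intro t ht
      have h1 : ¬ ((t : ℕ) < p) := (Finset.mem_filter.1 ht).2
      have h2 := t.isLt
      apply Fin.ext
      simp only [emB, rv]
      omega
    · intro u hu
      have hune : (u : ℕ) ≠ q - 1 := fun hv => (Finset.mem_erase.1 hu).1 (Fin.ext hv)
      have h2 := u.isLt
      apply Fin.ext
      simp only [emB, rv]
      omega
    · intro t ht
      have h1 : ¬ ((t : ℕ) < p) := (Finset.mem_filter.1 ht).2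
      have h2 := t.isLt
      have he : emB (q := q) hp (rv (rv (⟨(t : ℕ) - (p - 1), by omega⟩ : Fin q))) = t := by
        apply Fin.ext
        simp only [emB, rv]
        omega
      rw [he]

set_option maxHeartbeats 1000000 in
lemma split_sum {p q n : ℕ} (hp : 0 < p) (hq : 0 < q)
    (F : (Fin p → Fin n) → ℚ) (H : (Fin q → Fin n) → ℚ) :
    ∑ w : Fin (p+q-1) → Fin n,
      (F (fun i => w (emA hq i)) * H (fun j => w (emB hp (rv j)))) •
        ∏ t : Fin (p+q-1), (X (w t) : MvPolynomial (Fin n) ℚ)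
    = ∑ y : Fin n,
        (∑ w1 : Fin p → Fin n, (F w1 * (if w1 ⟨p-1, by omega⟩ = y then 1 else 0)) •
          ∏ t : Fin p, X (w1 t)) *
        (∑ w2 : Fin q → Fin n, (H w2 * (if w2 ⟨q-1, by omega⟩ = y then 1 else 0)) •
          ∏ t : Fin q, (if t = (⟨q-1, by omega⟩ : Fin q) then 1 else X (w2 t))) := by
  classical
  set lp : Fin p := ⟨p-1, by omega⟩
  set lq : Fin q := ⟨q-1, by omega⟩
  set P1 : (Fin p → Fin n) → MvPolynomial (Fin n) ℚ := fun w1 => ∏ t : Fin p, X (w1 t) with hP1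
  set P2 : (Fin q → Fin n) → MvPolynomial (Fin n) ℚ :=
    fun w2 => ∏ t : Fin q, (if t = lq then 1 else X (w2 t)) with hP2
  -- collapse the y-sum on the RHS
  have step1 : ∀ y : Fin n,
      (∑ w1 : Fin p → Fin n, (F w1 * (if w1 lp = y then 1 else 0)) • P1 w1) *
        (∑ w2 : Fin q → Fin n, (H w2 * (if w2 lq = y then 1 else 0)) • P2 w2)
      = ∑ w1 : Fin p → Fin n, ∑ w2 : Fin q → Fin n,
          ((F w1 * (if w1 lp = y then 1 else 0)) • P1 w1) *
          ((H w2 * (if w2 lq = y then 1 else 0)) • P2 w2) := by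
    intro y
    rw [Finset.sum_mul_sum]
  rw [Finset.sum_congr rfl (fun y _ => step1 y)]
  rw [Finset.sum_comm]
  have step2 : ∀ w1 : Fin p → Fin n,
      (∑ y : Fin n, ∑ w2 : Fin q → Fin n,
        ((F w1 * (if w1 lp = y then 1 else 0)) • P1 w1) *
        ((H w2 * (if w2 lq = y then 1 else 0)) • P2 w2))
      = ∑ w2 : Fin q → Fin n,
          ((F w1 * H w2 * (if w2 lq = w1 lp then 1 else 0)) • (P1 w1 * P2 w2)) := by
    intro w1
    rw [Finset.sum_comm]
    apply Finset.sum_congr rfl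
    intro w2 _
    rw [Finset.sum_eq_single (w1 lp)]
    · rw [if_pos rfl, smul_mul_smul_comm]
      congr 1
      ring
    · intro y _ hy
      rw [if_neg (fun hc => hy hc.symm), mul_zero, zero_smul, zero_mul]
    · intro hmem
      exact absurd (Finset.mem_univ _) hmem
  rw [Finset.sum_congr rfl (fun w1 _ => step2 w1)]
  -- turn into a sum over matching pairs
  rw [← Finset.sum_product' (s := (Finset.univ : Finset (Fin p → Fin n)))
    (t := (Finset.univ : Finset (Fin q → Fin n)))
    (f := fun w1 w2 => (F w1 * H w2 * (if w2 lq = w1 lp then 1 else 0)) • (P1 w1 * P2 w2))]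
  rw [show (Finset.univ : Finset (Fin p → Fin n)) ×ˢ (Finset.univ : Finset (Fin q → Fin n))
      = Finset.univ from rfl]
  rw [← Finset.sum_filter_of_ne (p := fun z : (Fin p → Fin n) × (Fin q → Fin n) => z.2 lq = z.1 lp)
    (by
      intro z _ hz
      by_contra hne
      apply hz
      rw [if_neg hne, mul_zero, zero_smul])]
  -- bijection with glued words
  refine Finset.sum_bij' ?_ ?_ ?_ ?_ ?_ ?_ ?_
  · intro w _
    exact (fun i => w (emA hq i), fun j => w (emB hp (rv j)))
  · intro z _
    exact fun t => if h : (t : ℕ) < p then z.1 ⟨t, h⟩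
      else z.2 (rv (⟨(t : ℕ) - (p - 1), by have := t.isLt; omega⟩ : Fin q))
  · intro w _
    rw [Finset.mem_filter]
    refine ⟨Finset.mem_univ _, ?_⟩
    show w (emB hp (rv lq)) = w (emA hq lp)
    apply congrArg
    apply Fin.ext
    simp only [emA, emB, rv, lq, lp]
    omega
  · intro z _
    exact Finset.mem_univ _
  · intro w _
    funext t
    by_cases h : (t : ℕ) < p
    · rw [dif_pos h]
      exact congrArg w (Fin.ext rfl)
    · rw [dif_neg h]
      apply congrArg w
      apply Fin.ext
      have := t.isLt
      simp only [emB, rv]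
      omega
  · intro z hz
    have hmatch : z.2 lq = z.1 lp := (Finset.mem_filter.1 hz).2
    apply Prod.ext
    · funext i
      dsimp only
      have hlt : ((emA hq i : Fin (p+q-1)) : ℕ) < p := i.isLt
      rw [dif_pos hlt]
      exact congrArg z.1 (Fin.ext rfl)
    · funext j
      dsimp only
      by_cases hj : (j : ℕ) = q - 1
      · have hj' : j = lq := Fin.ext hj
        have hlt : ((emB hp (rv j) : Fin (p+q-1)) : ℕ) < p := by
          simp only [emB, rv]
          omega
        rw [dif_pos hlt]
        have e1 : (⟨((emB hp (rv j) : Fin (p+q-1)) : ℕ), hlt⟩ : Fin p) = lp := by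
          apply Fin.ext
          simp only [emB, rv, lp]
          omega
        rw [e1, ← hmatch, hj']
      · have hlt : ¬ ((emB hp (rv j) : Fin (p+q-1)) : ℕ) < p := by
          have := j.isLt
          simp only [emB, rv]
          omega
        rw [dif_neg hlt]
        apply congrArg z.2
        apply Fin.ext
        have := j.isLt
        simp only [emB, rv]
        omega
  · intro w _
    have hmatch : w (emB hp (rv lq)) = w (emA hq lp) := by
      apply congrArg
      apply Fin.ext
      simp only [emA, emB, rv, lq, lp]
      omega
    rw [show (if (fun j => w (emB hp (rv j))) lq = (fun i => w (emA hq i)) lp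
        then (1:ℚ) else 0) = 1 from if_pos hmatch]
    rw [mul_one]
    rw [monomial_split hp hq w]

-- ===== graph indicator lemmas =====

def propI {m n : ℕ} (Gr : SimpleGraph (Fin m)) (w : Fin m → Fin n) : ℚ := YG Gr (toW w)

lemma propI_eq {m n : ℕ} (Gr : SimpleGraph (Fin m)) (w : Fin m → Fin n) :
    propI Gr w = if (∀ j k : Fin m, Gr.Adj j k → w j ≠ w k) then 1 else 0 := by
  rw [propI, YG]
  refine if_congr ?_ rfl rfl
  constructor
  · intro h j k hadj
    exact (toW_ne w j k).1 (h j k hadj)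
  · intro h j k hadj
    exact (toW_ne w j k).2 (h j k hadj)

lemma cspoly_eq {m n : ℕ} (Gr : SimpleGraph (Fin m)) :
    cspoly Gr n = ∑ w : Fin m → Fin n, propI Gr w • ∏ t : Fin m, X (w t) := by
  rw [cspoly, Finset.sum_filter]
  apply Finset.sum_congr rfl
  intro w _
  rw [propI_eq]
  split_ifs with h
  · rw [one_smul]
  · rw [zero_smul]

lemma concat_adj {p q : ℕ} (G : SimpleGraph (Fin p)) (H : SimpleGraph (Fin q))
    (u v : Fin (p + q - 1)) :
    (concatG G H).Adj u v ↔
      ((∃ i j : Fin p, G.Adj i j ∧ (u : ℕ) = (i : ℕ) ∧ (v : ℕ) = (j : ℕ)) ∨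
       (∃ i j : Fin q, H.Adj i j ∧ (u : ℕ) = (i : ℕ) + (p-1) ∧ (v : ℕ) = (j : ℕ) + (p-1))) := by
  rw [concatG, SimpleGraph.fromRel_adj]
  constructor
  · rintro ⟨hne, h | h⟩
    · exact h
    · rcases h with ⟨i, j, hij, hbu, hbv⟩ | ⟨i, j, hij, hbu, hbv⟩
      · exact Or.inl ⟨j, i, hij.symm, hbv, hbu⟩
      · exact Or.inr ⟨j, i, hij.symm, hbv, hbu⟩
  · intro h
    refine ⟨?_, Or.inl h⟩
    rcases h with ⟨i, j, hij, hu, hv⟩ | ⟨i, j, hij, hu, hv⟩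
    · intro e
      exact hij.ne (Fin.ext (by rw [← hu, ← hv, e]))
    · intro e
      apply hij.ne
      apply Fin.ext
      have := congrArg Fin.val e
      omega

lemma propI_concat {p q n : ℕ} (hp : 0 < p) (hq : 0 < q)
    (G : SimpleGraph (Fin p)) (H : SimpleGraph (Fin q)) (w : Fin (p+q-1) → Fin n) :
    propI (concatG G H) w
      = propI G (fun i => w (emA hq i)) * propI H (fun j => w (emB hp j)) := by
  rw [propI_eq, propI_eq, propI_eq, ind_mul_ind]
  refine if_congr ?_ rfl rfl
  constructor
  · intro h
    constructor
    · intro i j hij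
      exact h (emA hq i) (emA hq j) ((concat_adj G H _ _).2 (Or.inl ⟨i, j, hij, rfl, rfl⟩))
    · intro i j hij
      exact h (emB hp i) (emB hp j) ((concat_adj G H _ _).2 (Or.inr ⟨i, j, hij, rfl, rfl⟩))
  · rintro ⟨h1, h2⟩ u v hadj
    rcases (concat_adj G H u v).1 hadj with ⟨i, j, hij, hu, hv⟩ | ⟨i, j, hij, hu, hv⟩
    · have eu : u = emA hq i := Fin.ext hu
      have ev : v = emA hq j := Fin.ext hv
      rw [eu, ev]
      exact h1 i j hij
    · have eu : u = emB hp i := Fin.ext hu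
      have ev : v = emB hp j := Fin.ext hv
      rw [eu, ev]
      exact h2 i j hij

lemma propI_rev {q n : ℕ} (G' : SimpleGraph (Fin q)) (w : Fin q → Fin n) :
    propI (revG G') w = propI G' (fun j => w (rv j)) := by
  rw [propI_eq, propI_eq]
  have hff : ∀ x : Fin q, (⟨q - 1 - ((rv x : Fin q) : ℕ), by have := (rv x).isLt; omega⟩ : Fin q) = x := by
    intro x
    apply Fin.ext
    have := x.isLt
    simp only [rv]
    omega
  refine if_congr ?_ rfl rfl
  constructor
  · intro h j k hadj
    apply h (rv j) (rv k)
    show G'.Adj ⟨q - 1 - ((rv j : Fin q) : ℕ), _⟩ ⟨q - 1 - ((rv k : Fin q) : ℕ), _⟩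
    rw [hff j, hff k]
    exact hadj
  · intro h j k hadj
    have hadj' : G'.Adj (rv j) (rv k) := hadj
    have hres := h (rv j) (rv k) hadj'
    rw [rv_rv, rv_rv] at hres
    exact hres

-- ===== assembly =====

lemma core_sum {n : ℕ} (b1 b2 : ℕ) (C1 C2 : MvPolynomial (Fin n) ℚ) :
    ∑ y : Fin n, (X y * (AVal y b1 * C1)) * (AVal y b2 * C2)
    = ((((b1-1).factorial : ℕ) : ℚ) * (((b2-1).factorial : ℕ) : ℚ)) •
      (C1 * (C2 * Gcore n (b1-1) (b2-1))) := by
  rw [Gcore, Finset.mul_sum, Finset.mul_sum, Finset.smul_sum]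
  apply Finset.sum_congr rfl
  intro y _
  rw [AVal, AVal, MvPolynomial.smul_eq_C_mul, MvPolynomial.smul_eq_C_mul,
    MvPolynomial.smul_eq_C_mul, map_mul]
  ring

/-- family of coefficient polynomials attached to a set partition -/
def CFam {m : ℕ} (π : SetPtn m) (a : Fin m) (n : ℕ) : MvPolynomial (Fin n) ℚ :=
  ((ptype π a).1.map (IVal n)).prod

lemma CFam_pos {m : ℕ} (π : SetPtn m) (a : Fin m) :
    EPosFam (ptype π a).1.sum (CFam π a) := by
  have h := EPosFam.msProd (ptype π a).1 (fun m' => fun n => IVal n m') ?_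
  · exact h.congr (fun n => rfl)
  · intro m' hm'
    rw [ptype] at hm'
    obtain ⟨S, hS, rfl⟩ := Multiset.mem_map.1 hm'
    have hpos : 0 < S.card := Finset.card_pos.2
      (π.nonempty_of_mem_parts (Finset.mem_of_mem_erase (Finset.mem_val.mp hS)))
    exact ((EPosFam.ee_base S.card hpos).smul
      (Nat.cast_nonneg _)).congr (fun n => rfl)

lemma ptype_sum {m : ℕ} (π : SetPtn m) (a : Fin m) :
    (ptype π a).2 + (ptype π a).1.sum = m := by
  have h1 : (blockOf π a).card + ∑ S ∈ π.parts.erase (blockOf π a), S.card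
      = ∑ S ∈ π.parts, S.card :=
    Finset.add_sum_erase π.parts Finset.card (blockOf_mem π a)
  have h2 : ∑ S ∈ π.parts, S.card = m := by
    rw [Finpartition.sum_card_parts, Finset.card_univ, Fintype.card_fin]
  rw [ptype]
  show (blockOf π a).card + ((π.parts.erase (blockOf π a)).val.map Finset.card).sum = m
  rw [show ((π.parts.erase (blockOf π a)).val.map Finset.card).sum
      = ∑ S ∈ π.parts.erase (blockOf π a), S.card from rfl]
  omega

lemma ptype_b_pos {m : ℕ} (π : SetPtn m) (a : Fin m) : 0 < (ptype π a).2 :=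
  Finset.card_pos.2 ⟨a, mem_blockOf π a⟩

lemma EPos_of_EPosFam {m : ℕ} (Gr : SimpleGraph (Fin m))
    (h : EPosFam m (fun n => cspoly Gr n)) : EPos Gr := by
  obtain ⟨cc, hcc, he⟩ := h
  have hcard : Fintype.card (Fin m) = m := Fintype.card_fin m
  unfold EPos
  rw [hcard]
  exact ⟨cc, hcc, he⟩

set_option maxHeartbeats 2000000 in
lemma main_concat {P Q : ℕ} (hp : 0 < P) (hq : 0 < Q)
    (G : SimpleGraph (Fin P)) (G' : SimpleGraph (Fin Q))
    (hG : IsEPosNCAt G ⟨P-1, by omega⟩) (hG' : IsEPosNCAt G' ⟨Q-1, by omega⟩) :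
    EPos (concatG G (revG G')) := by
  classical
  obtain ⟨s, c, hc, hK⟩ := hG
  obtain ⟨s', c', hc', hK'⟩ := hG'
  have hfam : EPosFam (P + Q - 1) (fun n => cspoly (concatG G (revG G')) n) := by
    have hmain : ∀ n : ℕ, cspoly (concatG G (revG G')) n
        = ∑ z ∈ s ×ˢ s', (c z.1 * c' z.2) •
            ((((((ptype z.1 ⟨P-1, by omega⟩).2 - 1).factorial : ℕ) : ℚ) *
              ((((ptype z.2 ⟨Q-1, by omega⟩).2 - 1).factorial : ℕ) : ℚ)) •
            (CFam z.1 ⟨P-1, by omega⟩ n * (CFam z.2 ⟨Q-1, by omega⟩ n *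
              Gcore n ((ptype z.1 ⟨P-1, by omega⟩).2 - 1)
                ((ptype z.2 ⟨Q-1, by omega⟩).2 - 1)))) := by
      intro n
      rw [cspoly_eq]
      have hpt : ∀ w : Fin (P+Q-1) → Fin n,
          propI (concatG G (revG G')) w
          = propI G (fun i => w (emA hq i)) * propI G' (fun j => w (emB hp (rv j))) := by
        intro w
        rw [propI_concat hp hq, propI_rev]
      rw [Finset.sum_congr rfl (fun w _ => by rw [hpt w])]
      rw [split_sum hp hq (propI G) (propI G')]
      have hid : ∀ y : Fin n,
          (∑ w1 : Fin P → Fin n, (propI G w1 * (if w1 ⟨P-1, by omega⟩ = y then 1 else 0)) •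
            ∏ t : Fin P, X (w1 t)) *
          (∑ w2 : Fin Q → Fin n, (propI G' w2 * (if w2 ⟨Q-1, by omega⟩ = y then 1 else 0)) •
            ∏ t : Fin Q, (if t = (⟨Q-1, by omega⟩ : Fin Q) then 1 else X (w2 t)))
          = (lamFull P n ⟨P-1, by omega⟩ y (YG G)) * (lamCut Q n ⟨Q-1, by omega⟩ y (YG G')) :=
        fun y => rfl
      rw [Finset.sum_congr rfl (fun y _ => hid y)]
      have hy : ∀ y : Fin n,
          lamFull P n ⟨P-1, by omega⟩ y (YG G) * lamCut Q n ⟨Q-1, by omega⟩ y (YG G')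
          = ∑ z ∈ s ×ˢ s', (c z.1 * c' z.2) •
              ((X y * (AVal y (ptype z.1 ⟨P-1, by omega⟩).2 * CFam z.1 ⟨P-1, by omega⟩ n)) *
               (AVal y (ptype z.2 ⟨Q-1, by omega⟩).2 * CFam z.2 ⟨Q-1, by omega⟩ n)) := by
        intro y
        rw [lamFull_eq, lamCut_YG _ y hK, lamCut_YG _ y hK']
        have hXl : X y * (∑ π ∈ s, c π • lamCut P n ⟨P-1, by omega⟩ y (eSP π))
            = ∑ π ∈ s, c π • (X y * lamCut P n ⟨P-1, by omega⟩ y (eSP π)) := by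
          rw [Finset.mul_sum]
          exact Finset.sum_congr rfl (fun π _ => mul_smul_comm _ _ _)
        rw [hXl, Finset.sum_mul_sum]
        rw [← Finset.sum_product' (s := s) (t := s')]
        apply Finset.sum_congr rfl
        rintro ⟨π, σ⟩ _
        rw [smul_mul_smul_comm, lamCut_eSP, lamCut_eSP]
        rfl
      rw [Finset.sum_congr rfl (fun y _ => hy y)]
      rw [Finset.sum_comm]
      apply Finset.sum_congr rfl
      rintro ⟨π, σ⟩ _
      rw [← Finset.smul_sum]
      congr 1
      rw [core_sum]
    refine (EPosFam.finsetSum (s ×ˢ s') (fun z => c z.1 * c' z.2) _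
      (fun z _ => mul_nonneg (hc z.1) (hc' z.2)) (fun z _ => ?_)).congr
        (fun n => (hmain n).symm)
    have h1 := CFam_pos z.1 (⟨P-1, by omega⟩ : Fin P)
    have h2 := CFam_pos z.2 (⟨Q-1, by omega⟩ : Fin Q)
    have h3 := GcoreFam ((ptype z.1 ⟨P-1, by omega⟩).2 - 1) ((ptype z.2 ⟨Q-1, by omega⟩).2 - 1)
    have hb1 := ptype_b_pos z.1 (⟨P-1, by omega⟩ : Fin P)
    have hb2 := ptype_b_pos z.2 (⟨Q-1, by omega⟩ : Fin Q)
    have hs1 := ptype_sum z.1 (⟨P-1, by omega⟩ : Fin P)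
    have hs2 := ptype_sum z.2 (⟨Q-1, by omega⟩ : Fin Q)
    exact ((h1.mul (h2.mul h3)).cast (by omega)).smul
      (mul_nonneg (Nat.cast_nonneg _) (Nat.cast_nonneg _))
  exact EPos_of_EPosFam _ hfam

lemma foldl_eposnc (L : List LGraph) (A : LGraph) (hA : A.EPosNC)
    (hL : ∀ B ∈ L, B.Appendable) : (L.foldl LGraph.concat A).EPosNC := by
  induction L generalizing A with
  | nil => exact hA
  | cons B L ih =>
    rw [List.foldl_cons]
    exact ih (A.concat B) (hL B (List.mem_cons_self) A hA)
      (fun B' hB' => hL B' (List.mem_cons_of_mem _ hB'))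

theorem stmt13 (A A' : LGraph) (L : List LGraph)
    (hA : A.EPosNC) (hA' : A'.EPosNC)
    (hL : ∀ B ∈ L, B.Appendable) :
    EPos ((L.foldl LGraph.concat A).concat A'.rev).G := by
  have hC : (L.foldl LGraph.concat A).EPosNC := foldl_eposnc L A hA hL
  exact main_concat (L.foldl LGraph.concat A).npos A'.npos
    (L.foldl LGraph.concat A).G A'.G hC hA'
end
end

section
/- Let G be a finite simple graph on d ≥ 2 vertices with a distinguished vertex v. Suppose there exists a bijective labelling of the vertices of G by {1,…,d} in which v is labelled d and such that the resulting labelled graph is (e)-positive. Then the vertex-deleted graph G − v, obtained by removing v and all edges incident to v, is e-positive. -/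
open scoped Classical
noncomputable section

namespace Stmt15Aux


lemma inj_sum (α : Type) [Fintype α] [DecidableEq α] (n : ℕ) :
    ∑ u ∈ Finset.univ.filter (fun u : α → Fin n => Function.Injective u),
      ∏ a, MvPolynomial.X (u a) =
    (Fintype.card α).factorial • MvPolynomial.esymm (Fin n) ℚ (Fintype.card α) := by
  classical
  set k := Fintype.card α with hk
  rw [MvPolynomial.esymm, Finset.smul_sum]
  rw [← Finset.sum_fiberwise_of_maps_to (g := fun u : α → Fin n => Finset.univ.image u)
      (t := Finset.powersetCard k Finset.univ)
      (fun u hu => by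
        simp only [Finset.mem_filter] at hu
        exact Finset.mem_powersetCard_univ.2
          (by rw [Finset.card_image_of_injective _ hu.2, Finset.card_univ]))]
  refine Finset.sum_congr rfl fun A hA => ?_
  have hAcard : A.card = k := Finset.mem_powersetCard_univ.1 hA
  have hterm : ∀ u ∈ (Finset.univ.filter
      (fun u : α → Fin n => Function.Injective u)).filter
      (fun u => Finset.univ.image u = A),
      (∏ a, MvPolynomial.X (u a) : MvPolynomial (Fin n) ℚ) = ∏ i ∈ A, MvPolynomial.X i := by
    intro u hu
    simp only [Finset.mem_filter, Finset.mem_univ, true_and] at hu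
    rw [← hu.2, Finset.prod_image fun x _ y _ h => hu.1 h]
  rw [Finset.sum_congr rfl hterm, Finset.sum_const]
  congr 1
  -- fiber cardinality
  rw [Finset.filter_filter]
  have hsub : (Finset.univ.filter fun u : α → Fin n =>
      Function.Injective u ∧ Finset.univ.image u = A).card
      = Fintype.card {u : α → Fin n // Function.Injective u ∧ Finset.univ.image u = A} :=
    (Fintype.card_subtype _).symm
  rw [hsub]
  have hcardA : Fintype.card ↥A = k := by rw [Fintype.card_coe, hAcard]
  have e : {u : α → Fin n // Function.Injective u ∧ Finset.univ.image u = A} ≃ (α ≃ ↥A) :=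
    { toFun := fun u => Equiv.ofBijective
        (fun a => (⟨u.1 a, by
          have h := Finset.mem_image_of_mem u.1 (Finset.mem_univ a)
          rwa [u.2.2] at h⟩ : ↥A))
        ((Fintype.bijective_iff_injective_and_card _).2
          ⟨fun x y h => u.2.1 (Subtype.ext_iff.1 h), by rw [hcardA, hk]⟩)
      invFun := fun e => ⟨fun a => (e a : Fin n),
        ⟨Subtype.coe_injective.comp e.injective, by
          ext i
          simp only [Finset.mem_image, Finset.mem_univ, true_and]
          constructor
          · rintro ⟨a, rfl⟩; exact (e a).2
          · intro hi; exact ⟨e.symm ⟨i, hi⟩, by simp⟩⟩⟩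
      left_inv := fun u => Subtype.ext (funext fun a => rfl)
      right_inv := fun e => Equiv.ext fun a => Subtype.ext rfl }
  rw [Fintype.card_congr e, Fintype.card_equiv (Fintype.equivOfCardEq (by rw [hcardA, hk])), hk]



lemma block_sum (α β : Type) [Fintype α] [DecidableEq α] [Fintype β] [DecidableEq β]
    (κ : α → β) (n : ℕ) :
    ∑ u : α → Fin n, (if (∀ a b : α, a ≠ b → κ a = κ b → u a ≠ u b)
        then ∏ a, (MvPolynomial.X (u a) : MvPolynomial (Fin n) ℚ) else 0)
    = ∏ b : β, ((Fintype.card {a // κ a = b}).factorial •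
        MvPolynomial.esymm (Fin n) ℚ (Fintype.card {a // κ a = b})) := by
  classical
  have hfac : ∀ b : β, (Fintype.card {a // κ a = b}).factorial •
      MvPolynomial.esymm (Fin n) ℚ (Fintype.card {a // κ a = b})
      = ∑ w : {a // κ a = b} → Fin n,
          (if Function.Injective w then ∏ a, MvPolynomial.X (w a) else 0) := by
    intro b
    rw [← inj_sum, Finset.sum_filter]
  simp only [hfac]
  rw [Fintype.prod_sum]
  let Φ : (∀ b : β, ({a // κ a = b} → Fin n)) ≃ (α → Fin n) :=
    { toFun := fun g a => g (κ a) ⟨a, rfl⟩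
      invFun := fun u b a => u a.1
      left_inv := by
        intro g; funext b a; obtain ⟨x, hx⟩ := a; subst hx; rfl
      right_inv := fun u => rfl }
  refine (Fintype.sum_equiv Φ _ _ ?_).symm
  intro g
  have hkey : ∀ (b : β) (x : α) (h : κ x = b), g b ⟨x, h⟩ = Φ g x := by
    intro b x h; subst h; rfl
  have hcond : (∀ b, Function.Injective (g b)) ↔
      (∀ x y : α, x ≠ y → κ x = κ y → Φ g x ≠ Φ g y) := by
    constructor
    · intro hinj x y hne hk heq
      apply hne
      have h1 : g (κ x) ⟨x, rfl⟩ = g (κ x) ⟨y, hk.symm⟩ := by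
        rw [hkey (κ x) x rfl, hkey (κ x) y hk.symm]; exact heq
      exact congrArg Subtype.val (hinj (κ x) h1)
    · intro h b x y heq
      by_contra hne
      have hxy : x.1 ≠ y.1 := fun hv => hne (Subtype.ext hv)
      refine h x.1 y.1 hxy (x.2.trans y.2.symm) ?_
      rw [← hkey b x.1 x.2, ← hkey b y.1 y.2]
      exact heq
  by_cases hc : ∀ b, Function.Injective (g b)
  · rw [if_pos (hcond.1 hc)]
    have : ∀ b, (if Function.Injective (g b) then ∏ a : {a // κ a = b},
        (MvPolynomial.X (g b a) : MvPolynomial (Fin n) ℚ) else 0)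
        = ∏ a : {a // κ a = b}, MvPolynomial.X (Φ g a.1) := by
      intro b
      rw [if_pos (hc b)]
      exact Finset.prod_congr rfl fun a _ => by rw [hkey b a.1 a.2]
    rw [Finset.prod_congr rfl fun b _ => this b]
    exact Fintype.prod_fiberwise κ fun x => MvPolynomial.X (Φ g x)
  · rw [if_neg (fun hcc => hc (hcond.2 hcc))]
    push_neg at hc
    obtain ⟨b, hb⟩ := hc
    exact Finset.prod_eq_zero (Finset.mem_univ b) (if_neg hb)

lemma smul_map_prod (n : ℕ) (m : Multiset ℕ) (E : ℕ → MvPolynomial (Fin n) ℚ) :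
    (m.map (fun r => r.factorial • E r)).prod
      = (m.map Nat.factorial).prod • (m.map E).prod := by
  induction m using Multiset.induction with
  | empty => simp
  | cons a m ih =>
      simp only [Multiset.map_cons, Multiset.prod_cons, ih, smul_mul_smul_comm]

lemma prod_map_filter_ne_zero (n : ℕ) (m : Multiset ℕ) :
    (((m.filter (· ≠ 0)).map (MvPolynomial.esymm (Fin n) ℚ)).prod)
      = (m.map (MvPolynomial.esymm (Fin n) ℚ)).prod := by
  conv_rhs => rw [← Multiset.filter_add_not (fun r => r ≠ 0) m]
  rw [Multiset.map_add, Multiset.prod_add]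
  have h1 : (((m.filter (fun r => ¬ r ≠ 0)).map (MvPolynomial.esymm (Fin n) ℚ)).prod) = 1 := by
    apply Multiset.prod_eq_one
    intro x hx
    obtain ⟨r, hr, rfl⟩ := Multiset.mem_map.1 hx
    have : r = 0 := by simpa using (Multiset.mem_filter.1 hr).2
    rw [this, MvPolynomial.esymm_zero]
  rw [h1, mul_one]

lemma sum_filter_ne_zero (m : Multiset ℕ) : (m.filter (· ≠ 0)).sum = m.sum := by
  conv_rhs => rw [← Multiset.filter_add_not (fun r => r ≠ 0) m]
  rw [Multiset.sum_add]
  have h1 : (m.filter (fun r => ¬ r ≠ 0)).sum = 0 := by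
    apply Multiset.sum_eq_zero
    intro x hx
    simpa using (Multiset.mem_filter.1 hx).2
  rw [h1, add_zero]



variable {d : ℕ}

lemma sameBlock_iff (π : SetPtn d) (j k : Fin d) :
    sameBlock π j k ↔ π.part j = π.part k := by
  constructor
  · rintro ⟨B, hB, hj, hk⟩
    rw [π.part_eq_of_mem hB hj, π.part_eq_of_mem hB hk]
  · intro h
    exact ⟨π.part j, π.part_mem.2 (Finset.mem_univ j), π.mem_part (Finset.mem_univ j),
      h ▸ π.mem_part (Finset.mem_univ k)⟩

lemma blockOf_eq_part (π : SetPtn d) (a : Fin d) : blockOf π a = π.part a := by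
  ext k
  simp only [blockOf, Finset.mem_filter, Finset.mem_univ, true_and]
  rw [sameBlock_iff]
  constructor
  · intro h; exact h ▸ π.mem_part (Finset.mem_univ k)
  · intro h; exact (π.part_eq_of_mem (π.part_mem.2 (Finset.mem_univ a)) h).symm

/-- the multiset of "block sizes with `a` removed". -/
def mOf (π : SetPtn d) (a : Fin d) : Multiset ℕ :=
  π.parts.val.map (fun B => (B.erase a).card)

lemma mOf_decomp (π : SetPtn d) (a : Fin d) :
    mOf π a = ((π.part a).card - 1) ::ₘ ((π.parts.erase (π.part a)).val.map Finset.card) := by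
  have hmem : π.part a ∈ π.parts.val := π.part_mem.2 (Finset.mem_univ a)
  rw [mOf]
  conv_lhs => rw [← Multiset.cons_erase hmem]
  rw [Multiset.map_cons]
  congr 1
  · rw [Finset.card_erase_of_mem (π.mem_part (Finset.mem_univ a))]
  · rw [← Finset.erase_val]
    apply Multiset.map_congr rfl
    intro B hB
    have hBf : B ∈ π.parts.erase (π.part a) := by
      rw [Finset.mem_def, Finset.erase_val]; exact hB
    obtain ⟨hBne, hBp'⟩ := Finset.mem_erase.1 hBf
    have hBp : B ∈ π.parts.val := hBp'
    have hanB : a ∉ B := fun ha =>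
      hBne (π.eq_of_mem_parts hBp (π.part_mem.2 (Finset.mem_univ a)) ha
        (π.mem_part (Finset.mem_univ a)))
    rw [Finset.erase_eq_of_notMem hanB]

lemma mOf_of_ptype {π₁ π₂ : SetPtn d} (a : Fin d) (h : ptype π₁ a = ptype π₂ a) :
    mOf π₁ a = mOf π₂ a := by
  have h1 := congrArg Prod.fst h
  have h2 := congrArg Prod.snd h
  simp only [ptype, blockOf_eq_part] at h1 h2
  rw [mOf_decomp, mOf_decomp, h1, h2]

lemma mOf_sum (π : SetPtn d) (a : Fin d) : (mOf π a).sum = d - 1 := by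
  have htot : ∑ B ∈ π.parts, B.card = d := by
    rw [Finpartition.sum_card_parts, Finset.card_univ, Fintype.card_fin]
  have hmem : π.part a ∈ π.parts := π.part_mem.2 (Finset.mem_univ a)
  have hsplit : (π.part a).card + ∑ B ∈ π.parts.erase (π.part a), B.card = d := by
    rw [Finset.add_sum_erase _ _ hmem]; exact htot
  have hpos : 1 ≤ (π.part a).card :=
    Finset.card_pos.2 ⟨a, π.mem_part (Finset.mem_univ a)⟩
  rw [mOf_decomp, Multiset.sum_cons]
  have : ((π.parts.erase (π.part a)).val.map Finset.card).sum
      = ∑ B ∈ π.parts.erase (π.part a), B.card := rfl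
  rw [this]
  omega











/-- The word attached to a colouring of the non-distinguished vertices. -/
def Wd (a : Fin d) (n : ℕ) (u : ↥{y : Fin d | y ≠ a} → Fin n) : NCWord d :=
  fun j => if h : j = a then ⟨n + 1, Nat.succ_pos n⟩
    else ⟨(u ⟨j, h⟩ : ℕ) + 1, Nat.succ_pos _⟩

lemma Wd_ne (a : Fin d) (n : ℕ) (u : ↥{y : Fin d | y ≠ a} → Fin n) {j : Fin d}
    (h : j ≠ a) : Wd a n u j ≠ Wd a n u a := by
  intro hEq
  rw [show Wd a n u j = ⟨(u ⟨j, h⟩ : ℕ) + 1, Nat.succ_pos _⟩ from dif_neg h,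
      show Wd a n u a = ⟨n + 1, Nat.succ_pos n⟩ from dif_pos rfl,
      ] at hEq
  change (⟨_, _⟩ : {n : ℕ // 0 < n}) = ⟨_, _⟩ at hEq
  rw [Subtype.mk.injEq] at hEq
  have := (u ⟨j, h⟩).isLt
  omega

lemma Wd_eq_iff (a : Fin d) (n : ℕ) (u : ↥{y : Fin d | y ≠ a} → Fin n) {j k : Fin d}
    (hj : j ≠ a) (hk : k ≠ a) :
    Wd a n u j = Wd a n u k ↔ u ⟨j, hj⟩ = u ⟨k, hk⟩ := by
  rw [show Wd a n u j = ⟨(u ⟨j, hj⟩ : ℕ) + 1, Nat.succ_pos _⟩ from dif_neg hj,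
      show Wd a n u k = ⟨(u ⟨k, hk⟩ : ℕ) + 1, Nat.succ_pos _⟩ from dif_neg hk,
      ]
  change (⟨_, _⟩ : {n : ℕ // 0 < n}) = ⟨_, _⟩ ↔ _
  rw [Subtype.mk.injEq]
  constructor
  · intro hEq
    exact Fin.ext (by omega)
  · intro hEq; rw [hEq]

/-- The linear map `Θ`. -/
def theta (a : Fin d) (n : ℕ) : Md d →ₗ[ℚ] MvPolynomial (Fin n) ℚ where
  toFun f := ∑ u : ↥{y : Fin d | y ≠ a} → Fin n,
      f (Wd a n u) • ∏ s : ↥{y : Fin d | y ≠ a}, MvPolynomial.X (u s)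
  map_add' f g := by
    simp only [Pi.add_apply, add_smul, Finset.sum_add_distrib]
  map_smul' r f := by
    simp only [Pi.smul_apply, smul_eq_mul, mul_smul, RingHom.id_apply, Finset.smul_sum]



lemma theta_eSP (a : Fin d) (n : ℕ) (π : SetPtn d) :
    theta a n (eSP π) = ((mOf π a).map Nat.factorial).prod
      • ((mOf π a).map (MvPolynomial.esymm (Fin n) ℚ)).prod := by
  classical
  simp only [mOf]
  have hpt : ∀ u : ↥{y : Fin d | y ≠ a} → Fin n,
      eSP π (Wd a n u) = if (∀ x y : ↥{y : Fin d | y ≠ a}, x ≠ y →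
        π.part x.1 = π.part y.1 → u x ≠ u y) then (1 : ℚ) else 0 := by
    intro u
    rw [eSP]
    refine if_congr ?_ rfl rfl
    constructor
    · intro hw x y hxy hpart heq
      have hne : x.1 ≠ y.1 := fun hv => hxy (Subtype.ext hv)
      refine hw x.1 y.1 hne ((sameBlock_iff π _ _).2 hpart) ?_
      rw [Wd_eq_iff a n u x.2 y.2]
      exact heq
    · intro hu j k hjk hsb
      by_cases hja : j = a
      · have hka : k ≠ a := fun h => hjk (hja.trans h.symm)
        rw [hja]
        exact (Wd_ne a n u hka).symm
      · by_cases hka : k = a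
        · rw [hka]
          exact Wd_ne a n u hja
        · rw [Ne, Wd_eq_iff a n u hja hka]
          refine hu ⟨j, hja⟩ ⟨k, hka⟩ (fun h => hjk (congrArg Subtype.val h))
            ((sameBlock_iff π _ _).1 hsb)
  have hth : theta a n (eSP π) = ∑ u : ↥{y : Fin d | y ≠ a} → Fin n,
      (if (∀ x y : ↥{y : Fin d | y ≠ a}, x ≠ y → π.part x.1 = π.part y.1 → u x ≠ u y)
        then ∏ s : ↥{y : Fin d | y ≠ a}, (MvPolynomial.X (u s) : MvPolynomial (Fin n) ℚ)
        else 0) := by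
    rw [theta]
    simp only [LinearMap.coe_mk, AddHom.coe_mk]
    refine Finset.sum_congr rfl fun u _ => ?_
    rw [hpt u, ite_smul, one_smul, zero_smul]
  rw [hth, block_sum _ _ (fun s : ↥{y : Fin d | y ≠ a} => π.part s.1) n]
  -- restrict the product to the parts
  have hres : ∀ B : Finset (Fin d), B ∉ π.parts →
      (Fintype.card {s : ↥{y : Fin d | y ≠ a} // π.part s.1 = B}).factorial •
        MvPolynomial.esymm (Fin n) ℚ
          (Fintype.card {s : ↥{y : Fin d | y ≠ a} // π.part s.1 = B}) = 1 := by
    intro B hB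
    have : IsEmpty {s : ↥{y : Fin d | y ≠ a} // π.part s.1 = B} :=
      ⟨fun s => hB (by rw [← s.2]; exact π.part_mem.2 (Finset.mem_univ s.1.1))⟩
    rw [Fintype.card_eq_zero]
    simp
  have hcardfib : ∀ B ∈ π.parts,
      Fintype.card {s : ↥{y : Fin d | y ≠ a} // π.part s.1 = B} = (B.erase a).card := by
    intro B hB
    have e : {s : ↥{y : Fin d | y ≠ a} // π.part s.1 = B} ≃ ↥(B.erase a) :=
      { toFun := fun p => ⟨p.1.1, Finset.mem_erase.2
          ⟨p.1.2, by
            have h := π.mem_part (Finset.mem_univ p.1.1)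
            rwa [p.2] at h⟩⟩
        invFun := fun x => ⟨⟨x.1, (Finset.mem_erase.1 x.2).1⟩,
          π.part_eq_of_mem hB (Finset.mem_erase.1 x.2).2⟩
        left_inv := fun p => rfl
        right_inv := fun x => rfl }
    rw [Fintype.card_congr e, Fintype.card_coe]
  rw [← Finset.prod_subset (Finset.subset_univ π.parts) (fun B _ hB => hres B hB)]
  rw [Finset.prod_congr rfl (fun B hB => by rw [hcardfib B hB])]
  rw [Finset.prod_eq_multiset_prod, ← smul_map_prod, Multiset.map_map]
  rfl













lemma theta_YG (a : Fin d) (n : ℕ) (G' : SimpleGraph (Fin d)) :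
    theta a n (YG G') = cspoly (SimpleGraph.induce {y : Fin d | y ≠ a} G') n := by
  classical
  have hpt : ∀ u : ↥{y : Fin d | y ≠ a} → Fin n,
      YG G' (Wd a n u) = if (∀ x y : ↥{y : Fin d | y ≠ a},
        (SimpleGraph.induce {y : Fin d | y ≠ a} G').Adj x y → u x ≠ u y)
        then (1 : ℚ) else 0 := by
    intro u
    rw [YG]
    refine if_congr ?_ rfl rfl
    constructor
    · intro hw x y hadj heq
      have hadj' : G'.Adj x.1 y.1 := hadj
      exact hw x.1 y.1 hadj' ((Wd_eq_iff a n u x.2 y.2).2 heq)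
    · intro hu j k hadj
      by_cases hja : j = a
      · by_cases hka : k = a
        · exfalso; rw [hja, hka] at hadj; exact G'.loopless.irrefl a hadj
        · rw [hja]; exact (Wd_ne a n u hka).symm
      · by_cases hka : k = a
        · rw [hka]; exact Wd_ne a n u hja
        · rw [Ne, Wd_eq_iff a n u hja hka]
          exact hu ⟨j, hja⟩ ⟨k, hka⟩ hadj
  rw [theta]
  simp only [LinearMap.coe_mk, AddHom.coe_mk]
  rw [Finset.sum_congr rfl (fun u _ => by rw [hpt u, ite_smul, one_smul, zero_smul])]
  rw [cspoly, Finset.sum_filter]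
  exact Finset.sum_congr rfl fun _ _ => by congr 1

def pcast {N M : ℕ} (h : N = M) (p : N.Partition) : M.Partition :=
  ⟨p.parts, p.parts_pos, by rw [p.parts_sum, h]⟩

lemma cspoly_iso {V₁ V₂ : Type} [Fintype V₁] [DecidableEq V₁] [Fintype V₂] [DecidableEq V₂]
    (G₁ : SimpleGraph V₁) (G₂ : SimpleGraph V₂) (e : V₁ ≃ V₂)
    (hadj : ∀ x y, G₁.Adj x y ↔ G₂.Adj (e x) (e y)) (n : ℕ) :
    cspoly G₁ n = cspoly G₂ n := by
  classical
  rw [cspoly, cspoly]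
  refine Finset.sum_equiv (Equiv.arrowCongr e (Equiv.refl (Fin n))) ?_ ?_
  · intro κ
    simp only [Finset.mem_filter, Finset.mem_univ, true_and]
    constructor
    · intro hp x y hxy
      have := hp (e.symm x) (e.symm y) (by rw [hadj]; simpa using hxy)
      simpa [Equiv.arrowCongr] using this
    · intro hp x y hxy
      have := hp (e x) (e y) ((hadj x y).1 hxy)
      simpa [Equiv.arrowCongr] using this
  · intro κ _
    rw [← Equiv.prod_comp e (fun x => MvPolynomial.X
        ((Equiv.arrowCongr e (Equiv.refl (Fin n))) κ x))]
    refine Finset.prod_congr rfl fun x _ => ?_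
    simp [Equiv.arrowCongr]

lemma EPos_transfer {V₁ V₂ : Type} [Fintype V₁] [DecidableEq V₁] [Fintype V₂] [DecidableEq V₂]
    (G₁ : SimpleGraph V₁) (G₂ : SimpleGraph V₂) (e : V₁ ≃ V₂)
    (hadj : ∀ x y, G₁.Adj x y ↔ G₂.Adj (e x) (e y)) (h2 : EPos G₂) : EPos G₁ := by
  classical
  obtain ⟨c, hc, hid⟩ := h2
  have hcard : Fintype.card V₁ = Fintype.card V₂ := Fintype.card_congr e
  refine ⟨fun p => c (pcast hcard p), fun p => hc _, fun n => ?_⟩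
  rw [cspoly_iso G₁ G₂ e hadj n, hid n]
  refine (Fintype.sum_bijective (pcast hcard) ⟨?_, ?_⟩ _ _ fun p => rfl).symm
  · intro p q hpq
    have h2 := congrArg Nat.Partition.parts hpq
    exact Nat.Partition.ext h2
  · intro q
    exact ⟨pcast hcard.symm q, Nat.Partition.ext rfl⟩























lemma main (G' : SimpleGraph (Fin d)) (a : Fin d) (hpos : IsEPosNCAt G' a) :
    EPos (SimpleGraph.induce {y : Fin d | y ≠ a} G') := by
  classical
  obtain ⟨s, c, hc, hK⟩ := hpos
  have hcard : Fintype.card ↥{y : Fin d | y ≠ a} = d - 1 := by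
    have h1 : Fintype.card ↥{y : Fin d | y ≠ a} = Fintype.card {y : Fin d // ¬ y = a} :=
      Fintype.card_congr (Equiv.subtypeEquivRight fun y => Iff.rfl)
    rw [h1, Fintype.card_subtype_compl, Fintype.card_subtype_eq, Fintype.card_fin]
  refine ⟨fun p => ∑ π ∈ s, if p.parts = (mOf π a).filter (· ≠ 0)
      then c π * (((mOf π a).map Nat.factorial).prod : ℚ) else 0, ?_, ?_⟩
  · intro p
    apply Finset.sum_nonneg
    intro π _
    split
    · exact mul_nonneg (hc π) (Nat.cast_nonneg _)
    · exact le_refl 0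
  · intro n
    have hpsum : ∀ π : SetPtn d,
        ((mOf π a).filter (· ≠ 0)).sum = Fintype.card ↥{y : Fin d | y ≠ a} := by
      intro π; rw [sum_filter_ne_zero, mOf_sum, hcard]
    let pP : SetPtn d → (Fintype.card ↥{y : Fin d | y ≠ a}).Partition := fun π =>
      ⟨(mOf π a).filter (· ≠ 0),
        fun hi => Nat.pos_of_ne_zero (Multiset.mem_filter.1 hi).2,
        hpsum π⟩
    have hker : Ksub a ≤ LinearMap.ker (theta a n) := by
      rw [Ksub, Submodule.span_le]
      rintro f ⟨π₁, π₂, hty, rfl⟩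
      rw [SetLike.mem_coe, LinearMap.mem_ker, map_sub, theta_eSP, theta_eSP,
        mOf_of_ptype a hty, sub_self]
    have hYG : theta a n (YG G') = ∑ π ∈ s, c π • theta a n (eSP π) := by
      have h0 : theta a n (YG G' - ∑ π ∈ s, c π • eSP π) = 0 := hker hK
      rw [map_sub, map_sum] at h0
      simp only [map_smul] at h0
      exact sub_eq_zero.mp h0
    rw [← theta_YG a n G', hYG]
    have hR : ∀ p : (Fintype.card ↥{y : Fin d | y ≠ a}).Partition,
        (∑ π ∈ s, if p.parts = (mOf π a).filter (· ≠ 0)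
            then c π * (((mOf π a).map Nat.factorial).prod : ℚ) else 0)
          • ((p.parts.map fun r => MvPolynomial.esymm (Fin n) ℚ r).prod)
        = ∑ π ∈ s, (if p = pP π then c π • theta a n (eSP π) else 0) := by
      intro p
      rw [Finset.sum_smul]
      refine Finset.sum_congr rfl fun π _ => ?_
      have hiff : (p.parts = (mOf π a).filter (· ≠ 0)) ↔ p = pP π :=
        ⟨fun h => Nat.Partition.ext h, fun h => congrArg Nat.Partition.parts h⟩
      rw [ite_smul, zero_smul]
      by_cases hcnd : p = pP π
      · rw [if_pos (hiff.2 hcnd), if_pos hcnd]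
        have hparts : p.parts = (mOf π a).filter (· ≠ 0) := hiff.2 hcnd
        rw [theta_eSP, hparts, prod_map_filter_ne_zero, mul_smul, Nat.cast_smul_eq_nsmul]
      · rw [if_neg (fun h => hcnd (hiff.1 h)), if_neg hcnd]
    rw [Finset.sum_congr rfl (fun p _ => hR p), Finset.sum_comm]
    refine Finset.sum_congr rfl fun π _ => ?_
    exact (Fintype.sum_ite_eq' (pP π) (fun _ => c π • theta a n (eSP π))).symm


end Stmt15Aux

theorem stmt15 {V : Type} [Fintype V] [DecidableEq V] (G : SimpleGraph V) (v : V)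
    (d : ℕ) (hd : 2 ≤ d) (hcard : Fintype.card V = d)
    (h : ∃ φ : V ≃ Fin d, φ v = (⟨d - 1, by omega⟩ : Fin d) ∧
      IsEPosNCAt (SimpleGraph.comap φ.symm G) (⟨d - 1, by omega⟩ : Fin d)) :
    EPos (SimpleGraph.induce {x : V | x ≠ v} G) := by
  obtain ⟨φ, hφv, hpos⟩ := h
  have hmain := Stmt15Aux.main (SimpleGraph.comap φ.symm G) ⟨d - 1, by omega⟩ hpos
  have hne1 : ∀ x : V, x ≠ v → φ x ≠ (⟨d - 1, by omega⟩ : Fin d) :=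
    fun x hx hh => hx (φ.injective (hh.trans hφv.symm))
  have hne2 : ∀ y : Fin d, y ≠ (⟨d - 1, by omega⟩ : Fin d) → φ.symm y ≠ v :=
    fun y hy hh => hy (by rw [← hφv, ← hh, Equiv.apply_symm_apply])
  refine Stmt15Aux.EPos_transfer _ _
    ({ toFun := fun x => ⟨φ x.1, hne1 x.1 x.2⟩
       invFun := fun y => ⟨φ.symm y.1, hne2 y.1 y.2⟩
       left_inv := fun x => Subtype.ext (φ.symm_apply_apply x.1)
       right_inv := fun y => Subtype.ext (φ.apply_symm_apply y.1) }) ?_ hmain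
  intro x y
  show G.Adj x.1 y.1 ↔ G.Adj (φ.symm (φ x.1)) (φ.symm (φ y.1))
  rw [Equiv.symm_apply_apply, Equiv.symm_apply_apply]
end
end
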